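/- arXiv:math/0602507 — 6 statements merged into one kernel-verified Lean document; each statement's English description precedes it below -/
import Mathlib

section
/- Every chordal graph G has a tree-partition T of width tpw(G) such that for every independent set S of simplicial vertices of G and for every bag B of T, either B = {v} for some vertex v ∈ S, or the induced subgraph G[B − S] is connected. -/
open SimpleGraph

/-- The quotient graph of a partition of the vertices of `G` given by a map `f`:
bags are elements of `ι`, and two distinct bags are adjacent iff some edge of `G`
joins them. -/
def quotientGraph {V ι : Type} (G : SimpleGraph V) (f : V → ι) : SimpleGraph ι where
  Adj a b := a ≠ b ∧ ∃ u v, G.Adj u v ∧ f u = a ∧ f v = b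
  symm := by
    constructor
    rintro a b ⟨hab, u, v, h, hu, hv⟩
    exact ⟨hab.symm, v, u, h.symm, hv, hu⟩
  loopless := by constructor; rintro a ⟨h, -⟩; exact h rfl

/-- `f` describes a tree-partition of `G`: every bag (fiber of `f`) is nonempty
and the quotient graph is a forest. -/
def IsTreePartition {V ι : Type} (G : SimpleGraph V) (f : V → ι) : Prop :=
  Function.Surjective f ∧ (quotientGraph G f).IsAcyclic

/-- The tree-partition-width of `G`: the minimum over all tree-partitions of the
maximum bag size. -/
noncomputable def tpw {V : Type} (G : SimpleGraph V) : ℕ :=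
  sInf {w | ∃ (ι : Type) (f : V → ι), IsTreePartition G f ∧ ∀ i, (f ⁻¹' {i}).ncard ≤ w}

/-- A graph is chordal if it has no induced cycle of length at least four,
i.e. every induced cycle is a triangle. -/
def IsChordal {V : Type} (G : SimpleGraph V) : Prop :=
  ∀ n, 4 ≤ n → IsEmpty (cycleGraph n ↪g G)

/-- The tree-width of `G`: the minimum `k` such that `G` is a subgraph of a chordal
graph with no clique on `k + 2` vertices. -/
noncomputable def treewidth {V : Type} (G : SimpleGraph V) : ℕ :=
  sInf {k | ∃ H : SimpleGraph V, G ≤ H ∧ IsChordal H ∧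
    ∀ s : Set V, H.IsClique s → s.ncard ≤ k + 1}

/-- A vertex is simplicial if its neighbourhood is a clique. -/
def IsSimplicial {V : Type} (G : SimpleGraph V) (v : V) : Prop :=
  G.IsClique (G.neighborSet v)

/-- An independent set: no two of its vertices are adjacent. -/
def IsIndepSet {V : Type} (G : SimpleGraph V) (S : Set V) : Prop :=
  ∀ u ∈ S, ∀ v ∈ S, ¬ G.Adj u v

/-- `Δ` is the maximum vertex degree of the graph `G`. -/
def HasMaxDegree {V : Type} (G : SimpleGraph V) (Δ : ℕ) : Prop :=
  IsGreatest {d | ∃ v, (G.neighborSet v).ncard = d} Δ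

section Aux2
variable {V : Type} {G : SimpleGraph V}

private lemma aux_triangle_not_acyclic {ι : Type} {Q : SimpleGraph ι} {x y z : ι}
    (h1 : Q.Adj x y) (h2 : Q.Adj y z) (h3 : Q.Adj z x) : ¬ Q.IsAcyclic := by
  intro hac
  have hxy := h1.ne
  have hyz := h2.ne
  have hzx := h3.ne
  refine hac (Walk.cons h1 (Walk.cons h2 (Walk.cons h3 Walk.nil))) ?_
  rw [Walk.isCycle_def]
  refine ⟨⟨?_⟩, by simp, ?_⟩
  · simp only [Walk.edges_cons, Walk.edges_nil, List.nodup_cons, List.mem_cons,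
      List.mem_singleton, List.not_mem_nil, or_false, List.nodup_nil, and_true]
    constructor
    · rintro (h | h) <;> rw [Sym2.eq_iff] at h <;> tauto
    · constructor
      · intro h; rw [Sym2.eq_iff] at h; tauto
      · trivial
  · simp only [Walk.support_cons, Walk.support_nil, List.tail_cons, List.nodup_cons,
      List.mem_cons, List.mem_singleton, List.not_mem_nil, or_false, List.nodup_nil, and_true]
    refine ⟨?_, ?_, not_false⟩
    · rintro (h | h)
      · exact hyz h
      · exact hxy h.symm
    · exact fun h => hzx h

private lemma aux_induce_reachable {A : Set V} :
    ∀ {x y : V} (p : G.Walk x y) (_ : ∀ z ∈ p.support, z ∈ A) (hx : x ∈ A) (hy : y ∈ A),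
    (G.induce A).Reachable ⟨x, hx⟩ ⟨y, hy⟩ := by
  intro x y p
  induction p with
  | nil => intro _ hx hy; rfl
  | @cons a b c h q ih =>
    intro hp hx hy
    have hb : b ∈ A := hp b (by simp)
    have h1 : (G.induce A).Adj ⟨a, hx⟩ ⟨b, hb⟩ := by simpa using h
    exact h1.reachable.trans (ih (fun z hz => hp z (by simp [hz])) hb hy)

private lemma aux_walk_of_induce {A : Set V} :
    ∀ {x y : ↥A} (p : (G.induce A).Walk x y),
    ∃ q : G.Walk x.1 y.1, ∀ z ∈ q.support, z ∈ A := by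
  intro x y p
  induction p with
  | nil =>
    refine ⟨Walk.nil, ?_⟩
    rintro z hz
    simp only [Walk.support_nil, List.mem_singleton] at hz
    subst hz
    exact Subtype.coe_prop _
  | @cons a b c h q ih =>
    obtain ⟨q', hq'⟩ := ih
    have hab : G.Adj a.1 b.1 := by simpa using h
    refine ⟨Walk.cons hab q', ?_⟩
    intro z hz
    rcases List.mem_cons.mp (Walk.support_cons hab q' ▸ hz) with rfl | hm
    · exact Subtype.coe_prop _
    · exact hq' z hm

private lemma aux_cleanse {B S : Set V} (hind : _root_.IsIndepSet G S)
    (hsimp : ∀ v ∈ S, IsSimplicial G v) :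
    ∀ (m : ℕ) {x y : V} (p : G.Walk x y), p.length ≤ m → x ∉ S → y ∉ S →
    (∀ z ∈ p.support, z ∈ B) → ∃ q : G.Walk x y, ∀ z ∈ q.support, z ∈ B \ S := by
  intro m
  induction m with
  | zero =>
    intro x y p hlen hx hy hp
    have h0 : p.length = 0 := by omega
    have hxy := Walk.eq_of_length_eq_zero h0
    subst hxy
    refine ⟨Walk.nil, ?_⟩
    rintro z hz
    simp only [Walk.support_nil, List.mem_singleton] at hz
    subst hz
    exact ⟨hp z p.start_mem_support, hx⟩
  | succ m ih =>
    intro x y p hlen hx hy hp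
    cases p with
    | nil =>
      refine ⟨Walk.nil, ?_⟩
      rintro z hz
      simp only [Walk.support_nil, List.mem_singleton] at hz
      subst hz
      exact ⟨hp z (by simp), hx⟩
    | @cons _ b _ h q =>
      by_cases hb : b ∈ S
      · -- q cannot be nil since y ∉ S
        cases q with
        | nil => exact absurd hb hy
        | @cons _ d _ h' q' =>
          have hd : d ∉ S := fun hd => hind b hb d hd h'
          by_cases hxd : x = d
          · subst hxd
            obtain ⟨r, hr⟩ := ih q' (by simp [Walk.length_cons] at hlen ⊢; omega) hx hy
              (fun z hz => hp z (by simp [hz]))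
            exact ⟨r, hr⟩
          · have hadj : G.Adj x d := by
              have h1 : x ∈ G.neighborSet b := h.symm
              have h2 : d ∈ G.neighborSet b := h'
              exact hsimp b hb h1 h2 hxd
            obtain ⟨r, hr⟩ := ih q' (by simp [Walk.length_cons] at hlen ⊢; omega) hd hy
              (fun z hz => hp z (by simp [hz]))
            refine ⟨Walk.cons hadj r, ?_⟩
            intro z hz
            rcases List.mem_cons.mp (Walk.support_cons hadj r ▸ hz) with rfl | hzr
            · exact ⟨hp z (by simp), hx⟩
            · exact hr z hzr
      · obtain ⟨r, hr⟩ := ih q (by simp [Walk.length_cons] at hlen ⊢; omega) hb hy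
          (fun z hz => hp z (by simp [hz]))
        refine ⟨Walk.cons h r, ?_⟩
        intro z hz
        rcases List.mem_cons.mp (Walk.support_cons h r ▸ hz) with rfl | hzr
        · exact ⟨hp z (by simp), hx⟩
        · exact hr z hzr

private lemma aux_simplicial_bag {B S : Set V} (hind : _root_.IsIndepSet G S)
    (hsimp : ∀ v ∈ S, IsSimplicial G v) (hconn : (G.induce B).Connected) :
    (∃ v ∈ S, B = {v}) ∨ (G.induce (B \ S)).Connected := by
  rcases Set.eq_empty_or_nonempty (B \ S) with hBS | ⟨x₀, hx₀⟩
  · -- B ⊆ S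
    left
    have hBsub : B ⊆ S := fun z hz => by
      by_contra hzS; exact Set.eq_empty_iff_forall_notMem.mp hBS z ⟨hz, hzS⟩
    obtain ⟨⟨v, hv⟩⟩ := hconn.nonempty
    refine ⟨v, hBsub hv, ?_⟩
    ext z
    simp only [Set.mem_singleton_iff]
    constructor
    · intro hz
      by_contra hne
      have hr := hconn.preconnected ⟨z, hz⟩ ⟨v, hv⟩
      obtain ⟨p⟩ := hr
      cases p with
      | nil => exact hne (by simpa using congrArg Subtype.val (rfl : (⟨z, hz⟩ : ↥B) = ⟨z, hz⟩))
      | @cons _ b _ h q =>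
        have hadj : G.Adj z b.1 := by simpa using h
        exact hind z (hBsub hz) b.1 (hBsub b.2) hadj
    · rintro rfl; exact hv
  · right
    rw [connected_iff_exists_forall_reachable]
    refine ⟨⟨x₀, hx₀⟩, ?_⟩
    rintro ⟨y, hy⟩
    obtain ⟨p⟩ := hconn.preconnected ⟨x₀, hx₀.1⟩ ⟨y, hy.1⟩
    obtain ⟨q, hq⟩ := aux_walk_of_induce p
    obtain ⟨r, hr⟩ := aux_cleanse hind hsimp q.length q le_rfl hx₀.2 hy.2 hq
    exact aux_induce_reachable r hr hx₀ hy

end Aux2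


section Mon
variable {V ι₀ : Type} {G : SimpleGraph V}


private lemma aux_support_getElem? {u v : V} (p : G.Walk u v) :
    ∀ k, k ≤ p.length → p.support[k]? = some (p.getVert k) := by
  induction p with
  | nil =>
    intro k hk
    simp only [Walk.length_nil, Nat.le_zero] at hk
    subst hk; simp [SimpleGraph.Walk.getVert]
  | cons h q ih =>
    intro k hk
    cases k with
    | zero => simp [SimpleGraph.Walk.getVert]
    | succ k =>
      simp only [Walk.support_cons, List.getElem?_cons_succ, Walk.getVert_cons_succ]
      exact ih k (by simpa using hk)

private lemma aux_cycle_getVert_inj {a : V} (w : G.Walk a a) (hw : w.IsCycle) :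
    ∀ i, i < w.length → ∀ j, j < w.length → w.getVert i = w.getVert j → i = j := by
  have hnd := (Walk.isCycle_def _ |>.mp hw).2.2
  have hlen := w.length_support
  have key : ∀ i, i ≤ w.length → ∀ j, j ≤ w.length → 0 < i → 0 < j →
      w.getVert i = w.getVert j → i = j := by
    intro i hi j hj hi0 hj0 hij
    have h1 : w.support.tail[i-1]? = some (w.getVert i) := by
      rw [List.getElem?_tail]
      have : i - 1 + 1 = i := by omega
      rw [this]; exact aux_support_getElem? w i hi
    have h2 : w.support.tail[j-1]? = some (w.getVert j) := by
      rw [List.getElem?_tail]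
      have : j - 1 + 1 = j := by omega
      rw [this]; exact aux_support_getElem? w j hj
    rw [hij] at h1
    have hlt : i - 1 < w.support.tail.length := by
      simp [List.length_tail, hlen]; omega
    have := (List.getElem?_inj hlt hnd).mp (h1.trans h2.symm)
    omega
  intro i hi j hj hij
  rcases Nat.eq_zero_or_pos i with rfl | hi0
  · rcases Nat.eq_zero_or_pos j with rfl | hj0
    · rfl
    · exfalso
      have h0 : w.getVert w.length = w.getVert j :=
        (Walk.getVert_length w).trans ((Walk.getVert_zero w).symm.trans hij)
      have h3 : 3 ≤ w.length := hw.three_le_length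
      have := key w.length le_rfl j (by omega) (by omega) hj0 h0
      omega
  · rcases Nat.eq_zero_or_pos j with rfl | hj0
    · exfalso
      have h0 : w.getVert w.length = w.getVert i :=
        (Walk.getVert_length w).trans ((Walk.getVert_zero w).symm.trans hij.symm)
      have h3 : 3 ≤ w.length := hw.three_le_length
      have := key w.length le_rfl i (by omega) (by omega) hi0 h0
      omega
    · exact key i hi.le j hj.le hi0 hj0 hij

private lemma aux_mod_cancel {n a k l : ℕ} (h : (a + k) % n = (a + l) % n)
    (hk : k < n) (hl : l < n) : k = l := by
  have h1 := Nat.ModEq.add_left_cancel' a (h : (a + k) ≡ (a + l) [MOD n])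
  have h2 : k % n = l % n := h1
  rwa [Nat.mod_eq_of_lt hk, Nat.mod_eq_of_lt hl] at h2

private lemma aux_getVert_map {W : Type} {G' : SimpleGraph W} (f : G →g G') :
    ∀ {u v : V} (p : G.Walk u v) (k : ℕ), (p.map f).getVert k = f (p.getVert k) := by
  intro u v p
  induction p with
  | nil => intro k; simp [SimpleGraph.Walk.getVert]
  | cons h q ih =>
    intro k
    cases k with
    | zero => simp [SimpleGraph.Walk.getVert]
    | succ k => simpa [SimpleGraph.Walk.getVert] using ih k

private lemma aux_mono (φ : ℕ → ℕ) (m : ℕ)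
    (hstep : ∀ k, k < m → φ (k+1) = φ k ∨ φ (k+1) = φ k + 1) :
    ∀ j k, j ≤ k → k ≤ m → φ j ≤ φ k ∧ φ k ≤ φ j + (k - j) := by
  intro j k
  induction k with
  | zero => intro h1 _; interval_cases j; omega
  | succ k ih =>
    intro h1 h2
    rcases Nat.lt_or_ge j (k+1) with h | h
    · have := ih (by omega) (by omega)
      rcases hstep k (by omega) with hs | hs <;> omega
    · have : j = k + 1 := by omega
      subst this; omega

private lemma aux_fin_sub {l : ℕ} (hl : 2 ≤ l) (i j : Fin l) :
    (j - i).1 = 1 ↔ (j.1 = i.1 + 1 ∨ (i.1 = l - 1 ∧ j.1 = 0)) := by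
  rw [Fin.sub_def]
  show (l - i.1 + j.1) % l = 1 ↔ _
  have hi := i.2
  have hj := j.2
  by_cases h : l - i.1 + j.1 < l
  · rw [Nat.mod_eq_of_lt h]; omega
  · rw [Nat.mod_eq_sub_mod (by omega), Nat.mod_eq_of_lt (by omega)]; omega

private lemma aux_quot_acyclic (hch : ∀ m, 4 ≤ m → IsEmpty (cycleGraph m ↪g G))
    (f₀ : V → ι₀) (ha₀ : (quotientGraph G f₀).IsAcyclic)
    (H : SimpleGraph V) (hH : ∀ a b : V, H.Adj a b ↔ G.Adj a b ∧ f₀ a = f₀ b) :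
    (quotientGraph G H.connectedComponentMk).IsAcyclic := by
  classical
  set κ : V → H.ConnectedComponent := H.connectedComponentMk with hκdef
  have hHG : H ≤ G := fun {x y} hxy => ((hH x y).mp hxy).1
  set Q' : SimpleGraph H.ConnectedComponent := quotientGraph G κ with hQ'def
  have hQ'adj : ∀ a b, Q'.Adj a b ↔ (a ≠ b ∧ ∃ u v, G.Adj u v ∧ κ u = a ∧ κ v = b) := by
    intro a b; rfl
  have compGet : ∀ {a b : V} (p : H.Walk a b) (k : ℕ), κ (p.getVert k) = κ a := by
    intro a b p
    induction p with
    | nil => intro k; simp [SimpleGraph.Walk.getVert]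
    | @cons x y z h q ih =>
      intro k
      cases k with
      | zero => simp [SimpleGraph.Walk.getVert]
      | succ k =>
        rw [Walk.getVert_cons_succ, ih k]
        exact (ConnectedComponent.sound h.reachable).symm
  have f0const : ∀ {a b : V}, κ a = κ b → f₀ a = f₀ b := by
    intro a b hab
    obtain ⟨p⟩ := ConnectedComponent.exact hab
    clear hab
    induction p with
    | nil => rfl
    | cons h q ih => exact (((hH _ _).mp h).2).trans ih
  by_contra hcyc
  rw [IsAcyclic] at hcyc
  push_neg at hcyc
  obtain ⟨a₀, w, hw⟩ := hcyc
  set CCset : Set ℕ := {m | 3 ≤ m ∧ ∃ c : ℕ → H.ConnectedComponent,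
    (∀ i, i < m → ∀ j, j < m → c i = c j → i = j) ∧
    (∀ i, i < m → Q'.Adj (c i) (c ((i+1) % m)))} with hCCdef
  have hCCne : CCset.Nonempty := by
    refine ⟨w.length, hw.three_le_length, w.getVert, aux_cycle_getVert_inj w hw, ?_⟩
    intro i hi
    by_cases h : i + 1 < w.length
    · rw [Nat.mod_eq_of_lt h]
      exact w.adj_getVert_succ hi
    · have hieq : i + 1 = w.length := by omega
      have h0 : (i + 1) % w.length = 0 := by rw [hieq, Nat.mod_self]
      rw [h0, Walk.getVert_zero]
      have := w.adj_getVert_succ (show i < w.length from hi)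
      rwa [hieq, Walk.getVert_length] at this
  have hmem := Nat.sInf_mem hCCne
  set n := sInf CCset with hndef
  obtain ⟨hn3, c, hcinj, hcadj⟩ := hmem
  have hnpos : 0 < n := by omega
  set cc : ℕ → H.ConnectedComponent := fun i => c (i % n) with hccdef
  have h1n : 1 % n = 1 := Nat.mod_eq_of_lt (by omega)
  have ccper : ∀ i, cc (i + n) = cc i := by
    intro i
    show c ((i + n) % n) = c (i % n)
    rw [Nat.add_mod_right]
  have ccinj : ∀ i j, cc i = cc j → i % n = j % n := by
    intro i j h
    exact hcinj _ (Nat.mod_lt _ hnpos) _ (Nat.mod_lt _ hnpos) h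
  have hsucc_mod : ∀ i : ℕ, (i % n + 1) % n = (i + 1) % n := by
    intro i
    rw [Nat.add_mod i 1 n, h1n]
  have ccadj : ∀ i, Q'.Adj (cc i) (cc (i+1)) := by
    intro i
    have h1 := hcadj (i % n) (Nat.mod_lt _ hnpos)
    have h2 : cc (i+1) = c ((i % n + 1) % n) := by
      show c ((i+1) % n) = _
      rw [hsucc_mod]
    rw [h2]
    exact h1
  -- chordlessness of the minimal combinatorial cycle
  have hchord : ∀ i j, Q'.Adj (cc i) (cc j) →
      (i+1) % n = j % n ∨ (j+1) % n = i % n := by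
    intro i j hadj
    have ha : i % n < n := Nat.mod_lt _ hnpos
    have hb : j % n < n := Nat.mod_lt _ hnpos
    have hab : i % n ≠ j % n := by
      intro h
      refine (hQ'adj _ _ |>.mp hadj).1 ?_
      show c (i % n) = c (j % n)
      rw [h]
    by_contra hcon
    push_neg at hcon
    obtain ⟨h1, h2⟩ := hcon
    -- the gap t
    set t : ℕ := if i % n < j % n then j % n - i % n else j % n + n - i % n with htdef
    have htlow : 1 ≤ t := by rw [htdef]; split <;> omega
    have htup : t ≤ n - 1 := by rw [htdef]; split <;> omega
    have habt : i % n + t = j % n ∨ i % n + t = j % n + n := by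
      rw [htdef]; split
      · left; omega
      · right; omega
    have hcct : cc (i % n + t) = cc j := by
      rcases habt with h | h
      · rw [h]
        show c (j % n % n) = c (j % n)
        rw [Nat.mod_eq_of_lt hb]
      · rw [h, ccper]
        show c (j % n % n) = c (j % n)
        rw [Nat.mod_eq_of_lt hb]
    have ht1 : t ≠ 1 := by
      intro h
      apply h1
      rw [← hsucc_mod i]
      rcases habt with h' | h'
      · rw [h] at h'
        rw [← h', Nat.mod_eq_of_lt (by omega)]
      · rw [h] at h'
        have hin : i % n = n - 1 := by omega
        have hjn : j % n = 0 := by omega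
        rw [hin, hjn]
        have : n - 1 + 1 = n := by omega
        rw [this, Nat.mod_self]
    have ht2 : t ≠ n - 1 := by
      intro h
      apply h2
      rw [← hsucc_mod j]
      rcases habt with h' | h'
      · have hjn : j % n = i % n + (n - 1) := by omega
        have hin : i % n = 0 := by omega
        rw [hjn, hin]
        simp only [Nat.zero_add]
        have : n - 1 + 1 = n := by omega
        rw [this, Nat.mod_self]
      · have : j % n + 1 = i % n := by omega
        rw [this, Nat.mod_eq_of_lt ha]
    have htmid : 2 ≤ t ∧ t ≤ n - 2 := by omega
    -- build a shorter combinatorial cycle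
    have hmem2 : (t + 1) ∈ CCset := by
      refine ⟨by omega, fun k => cc (i % n + k % (t+1)), ?_, ?_⟩
      · intro x hx y hy hxy
        have hx' : x % (t+1) = x := Nat.mod_eq_of_lt hx
        have hy' : y % (t+1) = y := Nat.mod_eq_of_lt hy
        have hxy' : cc (i % n + x % (t+1)) = cc (i % n + y % (t+1)) := hxy
        rw [hx', hy'] at hxy'
        have := ccinj _ _ hxy'
        exact aux_mod_cancel this (by omega) (by omega)
      · intro k hk
        show Q'.Adj (cc (i % n + k % (t+1))) (cc (i % n + (k+1) % (t+1) % (t+1)))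
        rw [Nat.mod_mod_of_dvd _ dvd_rfl]
        by_cases hkt : k < t
        · have e1 : k % (t+1) = k := Nat.mod_eq_of_lt (by omega)
          have e2 : (k+1) % (t+1) = k + 1 := Nat.mod_eq_of_lt (by omega)
          rw [e1, e2]
          have h3 : i % n + (k + 1) = (i % n + k) + 1 := by omega
          rw [h3]
          exact ccadj (i % n + k)
        · have hkeq : k = t := by omega
          subst hkeq
          have e1 : t % (t+1) = t := Nat.mod_eq_of_lt (by omega)
          have e2 : (t+1) % (t+1) = 0 := Nat.mod_self _
          rw [e1, e2, Nat.add_zero]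
          have hcca : cc (i % n) = cc i := by
            show c (i % n % n) = c (i % n)
            rw [Nat.mod_eq_of_lt ha]
          rw [hcct, hcca]
          exact hadj.symm
    have := Nat.sInf_le hmem2
    rw [← hndef] at this
    omega
  -- choose edges between consecutive components
  have hedge : ∀ i : ℕ, ∃ x y : V, G.Adj x y ∧ κ x = cc i ∧ κ y = cc (i+1) :=
    fun i => ((hQ'adj _ _).mp (ccadj i)).2
  choose u₀ v₀ hadj₀ hκu₀ hκv₀ using hedge
  set uu : ℕ → V := fun i => u₀ (i % n) with huu
  set vv : ℕ → V := fun i => v₀ (i % n) with hvv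
  have hGuv : ∀ i, G.Adj (uu i) (vv i) := fun i => hadj₀ (i % n)
  have ccmm : ∀ i : ℕ, cc (i % n) = cc i := by
    intro i
    show c (i % n % n) = c (i % n)
    rw [Nat.mod_mod_of_dvd _ dvd_rfl]
  have hκuu : ∀ i, κ (uu i) = cc i := by
    intro i
    show κ (u₀ (i % n)) = cc i
    rw [hκu₀, ccmm]
  have hκvv : ∀ i, κ (vv i) = cc (i+1) := by
    intro i
    show κ (v₀ (i % n)) = cc (i+1)
    rw [hκv₀]
    show c ((i % n + 1) % n) = c ((i+1) % n)
    rw [hsucc_mod]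
  have hreach : ∀ i, H.Reachable (vv i) (uu (i+1)) := by
    intro i
    apply ConnectedComponent.exact
    show κ _ = κ _
    rw [hκvv i, hκuu (i+1)]
  have hs : ∀ i : ℕ, H.Walk (vv i) (uu (i+1)) := fun i => (hreach i).some
  -- assemble a closed walk in G following the cycle of components
  have EX : ∀ i : ℕ, ∃ (W : G.Walk (uu 0) (uu i)) (ψ : ℕ → ℕ), ψ 0 = 0 ∧ ψ W.length = i ∧
      (∀ k, k ≤ W.length → κ (W.getVert k) = cc (ψ k)) ∧
      (∀ k, k < W.length → ψ (k+1) = ψ k ∨ ψ (k+1) = ψ k + 1) := by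
    intro i
    induction i with
    | zero =>
      refine ⟨Walk.nil, fun _ => 0, rfl, rfl, ?_, ?_⟩
      · intro k hk
        simp only [Walk.length_nil, Nat.le_zero] at hk
        subst hk
        exact hκuu 0
      · intro k hk
        simp only [Walk.length_nil] at hk
        omega
    | succ i ih =>
      obtain ⟨W, ψ, hψ0, hψL, hψκ, hψstep⟩ := ih
      set T : G.Walk (uu i) (uu (i+1)) :=
        Walk.cons (hGuv i) ((hs i).map (Hom.ofLE hHG)) with hTdef
      have hTlen : T.length = (hs i).length + 1 := by
        rw [hTdef, Walk.length_cons, Walk.length_map]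
      have hTget : ∀ m : ℕ, T.getVert (m + 1) = (hs i).getVert m := by
        intro m
        rw [hTdef, Walk.getVert_cons_succ, aux_getVert_map]
        rfl
      have hLL : (W.append T).length = W.length + T.length := Walk.length_append W T
      refine ⟨W.append T, (fun k => if k ≤ W.length then ψ k else i + 1), ?_, ?_, ?_, ?_⟩
      · show (if 0 ≤ W.length then ψ 0 else i + 1) = 0
        rw [if_pos (Nat.zero_le _), hψ0]
      · show (if (W.append T).length ≤ W.length then ψ ((W.append T).length) else i + 1) = i + 1
        have h1 : ¬ (W.append T).length ≤ W.length := by omega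
        rw [if_neg h1]
      · intro k hk
        show κ ((W.append T).getVert k) = cc (if k ≤ W.length then ψ k else i + 1)
        rw [Walk.getVert_append]
        by_cases h1 : k < W.length
        · rw [if_pos h1, if_pos h1.le]
          exact hψκ k h1.le
        · rw [if_neg h1]
          by_cases h2 : k = W.length
          · subst h2
            rw [if_pos le_rfl, Nat.sub_self]
            have h4 : T.getVert 0 = uu i := Walk.getVert_zero T
            rw [h4, hψL]
            exact hκuu i
          · rw [if_neg (by omega)]
            obtain ⟨m, hm⟩ : ∃ m, k - W.length = m + 1 := ⟨k - W.length - 1, by omega⟩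
            rw [hm, hTget m]
            have h3 : κ ((hs i).getVert m) = κ (vv i) := compGet (hs i) m
            rw [h3, hκvv]
      · intro k hk
        rw [hLL] at hk
        show (if k + 1 ≤ W.length then ψ (k+1) else i + 1) = (if k ≤ W.length then ψ k else i + 1) ∨
          (if k + 1 ≤ W.length then ψ (k+1) else i + 1) = (if k ≤ W.length then ψ k else i + 1) + 1
        by_cases h1 : k + 1 ≤ W.length
        · rw [if_pos h1, if_pos (by omega)]
          exact hψstep k (by omega)
        · by_cases h2 : k = W.length
          · subst h2
            rw [if_neg h1, if_pos le_rfl, hψL]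
            right; rfl
          · rw [if_neg h1, if_neg (by omega)]
            left; rfl
  obtain ⟨W₁, ψ, hψ0, hψL, hψκ, hψstep⟩ := EX n
  have hun : uu n = uu 0 := by
    show u₀ (n % n) = u₀ (0 % n)
    rw [Nat.mod_self, Nat.zero_mod]
  set Wf : G.Walk (uu 0) (uu 0) := W₁.copy rfl hun with hWfdef
  have hWflen : Wf.length = W₁.length := Walk.length_copy _ _ _
  have hWfget : ∀ k, Wf.getVert k = W₁.getVert k := fun k => Walk.getVert_copy W₁ k rfl hun
  set PSet : Set ℕ := {l | 0 < l ∧ ∃ (d : ℕ → V) (φ : ℕ → ℕ),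
    (∀ k, k + 1 < l → G.Adj (d k) (d (k+1))) ∧
    G.Adj (d (l-1)) (d 0) ∧
    (∀ k, k < l → κ (d k) = cc (φ k)) ∧
    (∀ k, k + 1 < l → φ (k+1) = φ k ∨ φ (k+1) = φ k + 1) ∧
    (φ 0 % n = φ (l-1) % n ∨ φ 0 % n = (φ (l-1) + 1) % n) ∧
    φ 0 + (n-1) ≤ φ (l-1)} with hPdef
  have hW₁pos : n ≤ W₁.length := by
    have := (aux_mono ψ W₁.length hψstep 0 W₁.length (by omega) le_rfl).2
    omega
  have hPne : PSet.Nonempty := by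
    refine ⟨Wf.length, by omega, Wf.getVert, ψ, ?_, ?_, ?_, ?_, ?_, ?_⟩
    · intro k hk
      exact Wf.adj_getVert_succ (by omega)
    · have h1 := Wf.adj_getVert_succ (show Wf.length - 1 < Wf.length by omega)
      have h2 : Wf.length - 1 + 1 = Wf.length := by omega
      rw [h2, Walk.getVert_length] at h1
      rw [Walk.getVert_zero]
      exact h1
    · intro k hk
      rw [hWfget k]
      exact hψκ k (by rw [hWflen] at hk; omega)
    · intro k hk
      exact hψstep k (by rw [hWflen] at hk; omega)
    · rw [hWflen]
      have hE : W₁.length - 1 + 1 = W₁.length := by omega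
      rcases hψstep (W₁.length - 1) (by omega) with h | h <;> rw [hE, hψL] at h
      · left
        rw [hψ0, ← h, Nat.zero_mod, Nat.mod_self]
      · right
        rw [hψ0, ← h, Nat.zero_mod, Nat.mod_self]
    · rw [hWflen, hψ0]
      have hE : W₁.length - 1 + 1 = W₁.length := by omega
      rcases hψstep (W₁.length - 1) (by omega) with h | h <;> rw [hE, hψL] at h <;> omega
  have hPmem := Nat.sInf_mem hPne
  set l := sInf PSet with hldef
  obtain ⟨hl0, d, φ, pa, paw, pb, pc, pw, pd⟩ := hPmem
  have hmono := aux_mono φ (l-1) (fun k hk => pc k (by omega))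
  have hnl : n ≤ l := by
    have := (hmono 0 (l-1) (by omega) le_rfl).2
    omega
  have hsucc_modl : ∀ j : ℕ, (j % l + 1) % l = (j + 1) % l := by
    intro j
    rw [Nat.add_mod j 1 l, Nat.mod_eq_of_lt (show 1 < l by omega)]
  have Dadj : ∀ j : ℕ, G.Adj (d (j % l)) (d ((j+1) % l)) := by
    intro j
    have hj : j % l < l := Nat.mod_lt _ (by omega)
    by_cases h : j % l = l - 1
    · have h2 : (j+1) % l = 0 := by
        rw [← hsucc_modl j, h, (show l - 1 + 1 = l by omega), Nat.mod_self]
      rw [h2, h]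
      exact paw
    · have h2 : (j+1) % l = j % l + 1 := by
        rw [← hsucc_modl j, Nat.mod_eq_of_lt (by omega)]
      rw [h2]
      exact pa (j % l) (by omega)
  set ε : ℕ := if φ 0 % n = φ (l-1) % n then 0 else 1 with hεdef
  have hε01 : ε = 0 ∨ ε = 1 := by rw [hεdef]; split <;> simp
  have hεm : φ 0 % n = (φ (l-1) + ε) % n := by
    rw [hεdef]
    split
    · next h => rw [Nat.add_zero]; exact h
    · next h =>
      rcases pw with h' | h'
      · exact absurd h' h
      · exact h'
  have hφ0le : φ 0 ≤ φ (l-1) := by omega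
  set Dl : ℕ := φ (l-1) + ε - φ 0 with hDdef
  have hDdvd : n ∣ Dl := (Nat.modEq_iff_dvd' (by omega)).mp hεm
  have hDge : n ≤ Dl := by
    rcases hε01 with h | h
    · have h2 : n - 1 ≤ Dl := by omega
      rcases hDdvd with ⟨q, hq⟩
      rcases Nat.eq_zero_or_pos q with rfl | hq0
      · omega
      · have : n * 1 ≤ n * q := Nat.mul_le_mul_left n hq0
        omega
    · omega
  set Φ : ℕ → ℕ := fun j => if j < l then φ j else φ (j - l) + Dl with hΦdef
  have hΦlow : ∀ j, j < l → Φ j = φ j := by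
    intro j hj
    show (if j < l then φ j else φ (j - l) + Dl) = φ j
    rw [if_pos hj]
  have hΦhigh : ∀ j, l ≤ j → Φ j = φ (j - l) + Dl := by
    intro j hj
    show (if j < l then φ j else φ (j - l) + Dl) = φ (j - l) + Dl
    rw [if_neg (by omega)]
  have Φstep : ∀ j, j + 1 < 2 * l → Φ (j+1) = Φ j ∨ Φ (j+1) = Φ j + 1 := by
    intro j hj
    by_cases h1 : j + 1 < l
    · rw [hΦlow _ h1, hΦlow _ (by omega)]
      exact pc j h1
    · by_cases h2 : j + 1 = l
      · rw [hΦhigh (j+1) (by omega), hΦlow j (by omega)]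
        have h3 : j + 1 - l = 0 := by omega
        rw [h3]
        have hj' : j = l - 1 := by omega
        rw [hj']
        rcases hε01 with h | h
        · left; omega
        · right; omega
      · rw [hΦhigh (j+1) (by omega), hΦhigh j (by omega)]
        have e : j + 1 - l = (j - l) + 1 := by omega
        rw [e]
        rcases pc (j - l) (by omega) with h | h
        · left; omega
        · right; omega
  have Φmod : ∀ j, j < 2 * l → κ (d (j % l)) = cc (Φ j) := by
    intro j hj
    by_cases h1 : j < l
    · rw [Nat.mod_eq_of_lt h1, hΦlow _ h1]
      exact pb j h1
    · have h2 : j % l = j - l := by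
        rw [Nat.mod_eq_sub_mod (by omega), Nat.mod_eq_of_lt (by omega)]
      rw [h2, hΦhigh _ (by omega)]
      rcases hDdvd with ⟨q, hq⟩
      have h3 : cc (φ (j - l) + Dl) = cc (φ (j - l)) := by
        rw [hq]
        show c ((φ (j - l) + n * q) % n) = c (φ (j - l) % n)
        rw [Nat.add_mul_mod_self_left]
      rw [h3]
      exact pb (j - l) (by omega)
  have Φmono := aux_mono Φ (2*l - 1) (fun k hk => Φstep k (by omega))
  -- the shortcut lemma
  have SHORT : ∀ σ τ : ℕ, σ < l → σ < τ → τ ≤ σ + (l - 1) → τ - σ + 1 < l →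
      G.Adj (d (τ % l)) (d (σ % l)) →
      (Φ σ % n = Φ τ % n ∨ Φ σ % n = (Φ τ + 1) % n) →
      Φ σ + (n - 1) ≤ Φ τ → False := by
    intro σ τ hσ hστ hτ hlt hadj hmod hnet
    have hP2 : (τ - σ + 1) ∈ PSet := by
      refine ⟨by omega, fun j => d ((σ + j) % l), fun j => Φ (σ + j), ?_, ?_, ?_, ?_, ?_, ?_⟩
      · intro k hk
        exact Dadj (σ + k)
      · have e1 : τ - σ + 1 - 1 = τ - σ := by omega
        show G.Adj (d ((σ + (τ - σ + 1 - 1)) % l)) (d ((σ + 0) % l))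
        rw [e1, (show σ + (τ - σ) = τ by omega), Nat.add_zero]
        exact hadj
      · intro k hk
        exact Φmod (σ + k) (by omega)
      · intro k hk
        exact Φstep (σ + k) (by omega)
      · have e1 : τ - σ + 1 - 1 = τ - σ := by omega
        show Φ (σ + 0) % n = Φ (σ + (τ - σ + 1 - 1)) % n ∨
          Φ (σ + 0) % n = (Φ (σ + (τ - σ + 1 - 1)) + 1) % n
        rw [e1, (show σ + (τ - σ) = τ by omega), Nat.add_zero]
        exact hmod
      · have e1 : τ - σ + 1 - 1 = τ - σ := by omega
        show Φ (σ + 0) + (n-1) ≤ Φ (σ + (τ - σ + 1 - 1))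
        rw [e1, (show σ + (τ - σ) = τ by omega), Nat.add_zero]
        exact hnet
    have := Nat.sInf_le hP2
    rw [← hldef] at this
    omega
  have SHORTEQ : ∀ σ τ : ℕ, σ < l → σ + 1 < τ → τ ≤ σ + (l - 1) → τ - σ < l →
      d (τ % l) = d (σ % l) → Φ σ % n = Φ τ % n → Φ σ + n ≤ Φ τ → False := by
    intro σ τ hσ hστ hτ hlt heq hmod hnet
    have h1 : G.Adj (d ((τ - 1) % l)) (d (σ % l)) := by
      have h2 := Dadj (τ - 1)
      rw [(show τ - 1 + 1 = τ by omega), heq] at h2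
      exact h2
    have hst : Φ τ = Φ (τ - 1) ∨ Φ τ = Φ (τ - 1) + 1 := by
      have h3 := Φstep (τ - 1) (by omega)
      rw [(show τ - 1 + 1 = τ by omega)] at h3
      tauto
    refine SHORT σ (τ - 1) hσ (by omega) (by omega) (by omega) h1 ?_ ?_
    · rcases hst with h | h
      · left; rw [hmod, h]
      · right; rw [hmod, h]
    · rcases hst with h | h <;> omega
  -- injectivity of the minimal closed walk
  have hccφ : ∀ k k', k < l → k' < l → κ (d k) = κ (d k') → φ k % n = φ k' % n := by
    intro k k' hk hk' h
    rw [pb k hk, pb k' hk'] at h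
    exact ccinj _ _ h
  have hφeqcase : ∀ p q, q ≤ p → p < l → φ p % n = φ q % n → ¬ (φ q + n ≤ φ p) → φ p = φ q := by
    intro p q hqp hp hφeq hnbig
    have hle : φ q ≤ φ p := (hmono q p hqp (by omega)).1
    have hdvd := (Nat.modEq_iff_dvd' hle).mp (hφeq.symm : φ q ≡ φ p [MOD n])
    rcases hdvd with ⟨q0, hq0⟩
    rcases Nat.eq_zero_or_pos q0 with rfl | hpos
    · omega
    · exfalso
      have : n * 1 ≤ n * q0 := Nat.mul_le_mul_left n hpos
      omega
  have hinj : ∀ k k', k < l → k' < l → d k = d k' → k = k' := by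
    intro k k' hk hk' heq
    by_contra hne
    have key : ∀ p q, q < p → p < l → d p = d q → False := by
      intro p q hqp hp heq'
      have hq : q < l := by omega
      have hφeq : φ p % n = φ q % n := hccφ p q hp hq (by rw [heq'])
      by_cases hbig : φ q + n ≤ φ p
      · have hq1 : q + 1 < p := by
          rcases Nat.lt_or_ge (q+1) p with h | h
          · exact h
          · exfalso
            have hpq1 : p = q + 1 := by omega
            have h4 := pa q (by omega)
            rw [← hpq1, heq'] at h4
            exact G.loopless.irrefl _ h4
        refine SHORTEQ q p hq hq1 (by omega) (by omega) ?_ ?_ ?_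
        · rw [Nat.mod_eq_of_lt hp, Nat.mod_eq_of_lt hq]; exact heq'
        · rw [hΦlow q hq, hΦlow p hp]; exact hφeq.symm
        · rw [hΦlow q hq, hΦlow p hp]; omega
      · have hφpq : φ p = φ q := hφeqcase p q hqp.le hp hφeq hbig
        by_cases hsp : p = l - 1 ∧ q = 0
        · obtain ⟨hp', hq'⟩ := hsp
          rw [hp', hq'] at hφpq
          omega
        · have hcond : p + 1 < q + l := by omega
          refine SHORTEQ p (q + l) hp hcond (by omega) (by omega) ?_ ?_ ?_
          · rw [Nat.add_mod_right, Nat.mod_eq_of_lt hq, Nat.mod_eq_of_lt hp]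
            exact heq'.symm
          · rw [hΦlow p hp, hΦhigh (q+l) (by omega), (show q + l - l = q by omega)]
            rcases hDdvd with ⟨q1, hq1⟩
            rw [hq1]
            conv_rhs => rw [Nat.add_mul_mod_self_left]
            exact hφeq
          · rw [hΦlow p hp, hΦhigh (q+l) (by omega), (show q + l - l = q by omega)]
            omega
    rcases Nat.lt_or_ge k k' with h | h
    · exact key k' k h hk' heq.symm
    · exact key k k' (by omega) hk heq
  -- chordlessness of the minimal closed walk
  have hchordfree : ∀ k k', k < l → k' < l → G.Adj (d k) (d k') →
      (k' = k + 1 ∨ k = k' + 1 ∨ (k = l-1 ∧ k' = 0) ∨ (k' = l-1 ∧ k = 0)) := by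
    intro k k' hk hk' hadj
    by_contra hnc
    push_neg at hnc
    obtain ⟨hc1, hc2, hc3, hc4⟩ := hnc
    have hkk' : k ≠ k' := by rintro rfl; exact G.loopless.irrefl _ hadj
    by_cases hsame : κ (d k) = κ (d k')
    · have hφeq' : φ k % n = φ k' % n := hccφ k k' hk hk' hsame
      have key : ∀ p q, q < p → p < l → G.Adj (d p) (d q) → φ p % n = φ q % n →
          p ≠ q + 1 → ¬(p = l - 1 ∧ q = 0) → False := by
        intro p q hqp hp hpadj hφeq hne1 hne2
        have hq : q < l := by omega
        by_cases hbig : φ q + n ≤ φ p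
        · refine SHORT q p hq hqp (by omega) (by omega) ?_ ?_ ?_
          · rw [Nat.mod_eq_of_lt hp, Nat.mod_eq_of_lt hq]; exact hpadj
          · left; rw [hΦlow q hq, hΦlow p hp]; exact hφeq.symm
          · rw [hΦlow q hq, hΦlow p hp]; omega
        · have hφpq : φ p = φ q := hφeqcase p q hqp.le hp hφeq hbig
          refine SHORT p (q + l) hp (by omega) (by omega) (by omega) ?_ ?_ ?_
          · rw [Nat.add_mod_right, Nat.mod_eq_of_lt hq, Nat.mod_eq_of_lt hp]
            exact hpadj.symm
          · left
            rw [hΦlow p hp, hΦhigh (q+l) (by omega), (show q + l - l = q by omega)]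
            rcases hDdvd with ⟨q1, hq1⟩
            rw [hq1]
            conv_rhs => rw [Nat.add_mul_mod_self_left]
            exact hφeq
          · rw [hΦlow p hp, hΦhigh (q+l) (by omega), (show q + l - l = q by omega)]
            omega
      rcases Nat.lt_or_ge k' k with h | h
      · exact key k k' h hk hadj hφeq' hc2 (fun hx => hc3 hx.1 hx.2)
      · exact key k' k (by omega) hk' hadj.symm hφeq'.symm hc1 (fun hx => hc4 hx.1 hx.2)
    · have hQ : Q'.Adj (cc (φ k)) (cc (φ k')) := by
        rw [← pb k hk, ← pb k' hk']
        exact (hQ'adj _ _).mpr ⟨hsame, d k, d k', hadj, rfl, rfl⟩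
      have hch2 := hchord _ _ hQ
      have key2 : ∀ p q, p < l → q < l → G.Adj (d p) (d q) → (φ q + 1) % n = φ p % n →
          q ≠ p + 1 → p ≠ q + 1 → ¬(q = l-1 ∧ p = 0) → ¬(p = l-1 ∧ q = 0) → False := by
        intro p q hp hq hpq hstep1 hn1 hn2 hn3 hn4
        have hpqne : p ≠ q := by rintro rfl; exact G.loopless.irrefl _ hpq
        rcases Nat.lt_or_ge p q with h | h
        · have hΦle : Φ p ≤ Φ q := (Φmono p q h.le (by omega)).1
          rw [hΦlow p hp, hΦlow q hq] at hΦle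
          have hnet : φ p + (n-1) ≤ φ q := by
            have hdvd := (Nat.modEq_iff_dvd' (by omega)).mp (hstep1.symm : φ p ≡ φ q + 1 [MOD n])
            rcases hdvd with ⟨q0, hq0⟩
            rcases Nat.eq_zero_or_pos q0 with rfl | hpos
            · omega
            · have : n * 1 ≤ n * q0 := Nat.mul_le_mul_left n hpos
              omega
          refine SHORT p q hp h (by omega) (by omega) ?_ ?_ ?_
          · rw [Nat.mod_eq_of_lt hp, Nat.mod_eq_of_lt hq]; exact hpq.symm
          · right; rw [hΦlow p hp, hΦlow q hq]; exact hstep1.symm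
          · rw [hΦlow p hp, hΦlow q hq]; omega
        · have hqp : q < p := by omega
          have hΦle : Φ p ≤ Φ (q + l) := (Φmono p (q+l) (by omega) (by omega)).1
          rw [hΦlow p hp, hΦhigh (q+l) (by omega), (show q + l - l = q by omega)] at hΦle
          have hmodD : (φ q + Dl + 1) % n = φ p % n := by
            rcases hDdvd with ⟨q1, hq1⟩
            rw [hq1, (show φ q + n * q1 + 1 = (φ q + 1) + n * q1 by omega),
              Nat.add_mul_mod_self_left]
            exact hstep1
          have hnet : φ p + (n-1) ≤ φ q + Dl := by
            have hdvd := (Nat.modEq_iff_dvd' (by omega)).mp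
              (hmodD.symm : φ p ≡ φ q + Dl + 1 [MOD n])
            rcases hdvd with ⟨q0, hq0⟩
            rcases Nat.eq_zero_or_pos q0 with rfl | hpos
            · omega
            · have : n * 1 ≤ n * q0 := Nat.mul_le_mul_left n hpos
              omega
          refine SHORT p (q + l) hp (by omega) (by omega) (by omega) ?_ ?_ ?_
          · rw [Nat.add_mod_right, Nat.mod_eq_of_lt hq, Nat.mod_eq_of_lt hp]
            exact hpq.symm
          · right
            rw [hΦlow p hp, hΦhigh (q+l) (by omega), (show q + l - l = q by omega)]
            exact hmodD.symm
          · rw [hΦlow p hp, hΦhigh (q+l) (by omega), (show q + l - l = q by omega)]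
            omega
      rcases hch2 with h | h
      · exact key2 k' k hk' hk hadj.symm h hc2 hc1 (fun hx => hc3 hx.1 hx.2) (fun hx => hc4 hx.1 hx.2)
      · exact key2 k k' hk hk' hadj h hc1 hc2 (fun hx => hc4 hx.1 hx.2) (fun hx => hc3 hx.1 hx.2)
  -- endgame
  by_cases hl4 : 4 ≤ l
  · -- build an induced cycle of length ≥ 4 in G
    have hembinj : Function.Injective (fun i : Fin l => d i.1) := by
      intro i j hij
      exact Fin.ext (hinj i.1 j.1 i.2 j.2 hij)
    have e : cycleGraph l ↪g G := by
      refine ⟨⟨fun i : Fin l => d i.1, hembinj⟩, ?_⟩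
      intro i j
      show G.Adj (d i.1) (d j.1) ↔ (cycleGraph l).Adj i j
      rw [cycleGraph_adj']
      constructor
      · intro hadj
        rcases hchordfree i.1 j.1 i.2 j.2 hadj with h | h | h | h
        · right; exact (aux_fin_sub (by omega) i j).mpr (Or.inl h)
        · left; exact (aux_fin_sub (by omega) j i).mpr (Or.inl h)
        · right; exact (aux_fin_sub (by omega) i j).mpr (Or.inr h)
        · left; exact (aux_fin_sub (by omega) j i).mpr (Or.inr h)
      · rintro (h | h)
        · rcases (aux_fin_sub (by omega) j i).mp h with h' | h'
          · rw [h']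
            exact (pa j.1 (by have := i.2; omega)).symm
          · rw [h'.2, h'.1]
            exact paw.symm
        · rcases (aux_fin_sub (by omega) i j).mp h with h' | h'
          · rw [h']
            exact pa i.1 (by have := j.2; omega)
          · rw [h'.1, h'.2]
            exact paw
    exact (hch l hl4).false e
  · -- l = n = 3 : triangle case, contradict acyclicity of the bag quotient
    have hl3' : l = 3 := by omega
    have hn3' : n = 3 := by omega
    have hpd' : φ 0 + 2 ≤ φ 2 := by
      have h3 := pd
      rw [hl3', hn3'] at h3
      norm_num at h3
      exact h3
    have s1 : φ 1 = φ 0 + 1 ∧ φ 2 = φ 0 + 2 := by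
      have h1 := pc 0 (by omega)
      have h2 := pc 1 (by omega)
      have hm := (hmono 1 (l-1) (by omega) le_rfl).2
      rw [hl3'] at hm
      norm_num at hm
      norm_num at h1 h2
      omega
    have hdist : ∀ x y : ℕ, x < 3 → y < 3 → x ≠ y → κ (d x) ≠ κ (d y) := by
      intro x y hx hy hxy h
      have h2 := hccφ x y (by omega) (by omega) h
      have hx1 : φ x = φ 0 + x := by
        interval_cases x
        · omega
        · omega
        · omega
      have hy1 : φ y = φ 0 + y := by
        interval_cases y
        · omega
        · omega
        · omega
      rw [hx1, hy1, hn3'] at h2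
      omega
    have a01 : G.Adj (d 0) (d 1) := pa 0 (by omega)
    have a12 : G.Adj (d 1) (d 2) := pa 1 (by omega)
    have a20 : G.Adj (d 2) (d 0) := by
      have h := paw
      rw [hl3'] at h
      norm_num at h
      exact h
    have mkQ : ∀ x y : V, G.Adj x y → κ x ≠ κ y →
        (quotientGraph G f₀).Adj (f₀ x) (f₀ y) := by
      intro x y hxy hκ
      refine ⟨?_, x, y, hxy, rfl, rfl⟩
      intro h
      exact hκ (ConnectedComponent.sound ((hH x y).mpr ⟨hxy, h⟩).reachable)
    exact aux_triangle_not_acyclic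
      (mkQ _ _ a01 (hdist 0 1 (by omega) (by omega) (by omega)))
      (mkQ _ _ a12 (hdist 1 2 (by omega) (by omega) (by omega)))
      (mkQ _ _ a20 (hdist 2 0 (by omega) (by omega) (by omega))) ha₀

end Mon

section MoreAux
variable {V ι₀ : Type} {G : SimpleGraph V}

private lemma aux_comp_support {H : SimpleGraph V} :
    ∀ {a b : V} (p : H.Walk a b), ∀ z ∈ p.support,
      H.connectedComponentMk z = H.connectedComponentMk a := by
  intro a b p
  induction p with
  | nil =>
    intro z hz
    simp only [Walk.support_nil, List.mem_singleton] at hz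
    subst hz; rfl
  | @cons x y zz h q ih =>
    intro z hz
    rcases List.mem_cons.mp (Walk.support_cons h q ▸ hz) with rfl | hm
    · rfl
    · exact (ih z hm).trans (ConnectedComponent.sound h.reachable).symm

private lemma aux_f0const {H : SimpleGraph V} {f₀ : V → ι₀}
    (hH : ∀ a b : V, H.Adj a b ↔ G.Adj a b ∧ f₀ a = f₀ b) {a b : V}
    (h : H.connectedComponentMk a = H.connectedComponentMk b) : f₀ a = f₀ b := by
  obtain ⟨p⟩ := ConnectedComponent.exact h
  clear h
  induction p with
  | nil => rfl
  | cons h q ih => exact (((hH _ _).mp h).2).trans ih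

private lemma aux_bag_connected {H : SimpleGraph V} (hHG : H ≤ G) (v : V) :
    (G.induce (H.connectedComponentMk ⁻¹' {H.connectedComponentMk v})).Connected := by
  rw [connected_iff]
  refine ⟨?_, ⟨⟨v, rfl⟩⟩⟩
  rintro ⟨x, hx⟩ ⟨y, hy⟩
  simp only [Set.mem_preimage, Set.mem_singleton_iff] at hx hy
  obtain ⟨p⟩ := ConnectedComponent.exact (hx.trans hy.symm)
  have hsup : ∀ z ∈ (p.map (Hom.ofLE hHG)).support,
      z ∈ (H.connectedComponentMk ⁻¹' {H.connectedComponentMk v}) := by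
    intro z hz
    rw [Walk.support_map] at hz
    have hz' : z ∈ p.support := by
      simpa using hz
    simp only [Set.mem_preimage, Set.mem_singleton_iff]
    exact (aux_comp_support p z hz').trans hx
  exact aux_induce_reachable (p.map (Hom.ofLE hHG)) hsup
    (by simp only [Set.mem_preimage, Set.mem_singleton_iff]; exact hx)
    (by simp only [Set.mem_preimage, Set.mem_singleton_iff]; exact hy)

end MoreAux

/-- Every chordal graph has an optimal tree-partition such that for every independent
set `S` of simplicial vertices, each bag is either a singleton from `S` or induces a
connected subgraph after removing `S`. -/
theorem stmt4 {V : Type} [Fintype V] (G : SimpleGraph V) (hc : IsChordal G) :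
    ∃ (ι : Type) (f : V → ι), IsTreePartition G f ∧
      (∀ i, (f ⁻¹' {i}).ncard ≤ tpw G) ∧
      ∀ S : Set V, _root_.IsIndepSet G S → (∀ v ∈ S, IsSimplicial G v) →
        ∀ i, (∃ v ∈ S, f ⁻¹' {i} = {v}) ∨ (G.induce (f ⁻¹' {i} \ S)).Connected := by
  classical
  rcases isEmpty_or_nonempty V with hV | hV
  · refine ⟨Empty, fun v => (hV.false v).elim, ⟨fun i => i.elim, fun i => i.elim⟩,
      fun i => i.elim, fun S _ _ i => i.elim⟩
  · have hne : {w | ∃ (ι : Type) (f : V → ι), IsTreePartition G f ∧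
        ∀ i, (f ⁻¹' {i}).ncard ≤ w}.Nonempty := by
      refine ⟨Fintype.card V, Unit, fun _ => (), ⟨fun u => ⟨hV.some, Subsingleton.elim _ _⟩, ?_⟩, ?_⟩
      · have hbot : quotientGraph G (fun _ : V => ()) = ⊥ := by
          ext a b
          constructor
          · rintro ⟨hab, -⟩
            exact absurd (Subsingleton.elim a b) hab
          · intro h
            exact absurd h (by simp)
        rw [hbot]
        intro u p hp
        exact hp.ne_bot rfl
      · intro i
        calc ((fun _ : V => ()) ⁻¹' {i}).ncard ≤ (Set.univ : Set V).ncard :=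
              Set.ncard_le_ncard (Set.subset_univ _) (Set.toFinite _)
          _ = Fintype.card V := by rw [Set.ncard_univ, Nat.card_eq_fintype_card]
    have hmem : ∃ (ι : Type) (f : V → ι), IsTreePartition G f ∧
        ∀ i, (f ⁻¹' {i}).ncard ≤ tpw G := Nat.sInf_mem hne
    obtain ⟨ι₀, f₀, ⟨hs₀, ha₀⟩, hw₀⟩ := hmem
    set H : SimpleGraph V :=
      { Adj := fun a b => G.Adj a b ∧ f₀ a = f₀ b,
        symm := ⟨fun a b h => ⟨h.1.symm, h.2.symm⟩⟩,
        loopless := ⟨fun a h => G.loopless.irrefl a h.1⟩ } with hHdef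
    have hH : ∀ a b : V, H.Adj a b ↔ G.Adj a b ∧ f₀ a = f₀ b := fun a b => Iff.rfl
    have hHG : H ≤ G := fun {x y} hxy => ((hH x y).mp hxy).1
    have hsurj : Function.Surjective H.connectedComponentMk := by
      intro comp
      exact comp.exists_rep
    refine ⟨H.ConnectedComponent, H.connectedComponentMk, ⟨hsurj, ?_⟩, ?_, ?_⟩
    · exact aux_quot_acyclic hc f₀ ha₀ H hH
    · intro i
      obtain ⟨v, rfl⟩ := hsurj i
      have hsub : H.connectedComponentMk ⁻¹' {H.connectedComponentMk v} ⊆ f₀ ⁻¹' {f₀ v} := by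
        intro z hz
        simp only [Set.mem_preimage, Set.mem_singleton_iff] at hz ⊢
        exact aux_f0const hH hz
      calc (H.connectedComponentMk ⁻¹' {H.connectedComponentMk v}).ncard
          ≤ (f₀ ⁻¹' {f₀ v}).ncard := Set.ncard_le_ncard hsub (Set.toFinite _)
        _ ≤ tpw G := hw₀ (f₀ v)
    · intro S hind hsimp i
      obtain ⟨v, rfl⟩ := hsurj i
      exact aux_simplicial_bag hind hsimp (aux_bag_connected hHG v)
end

section
/- Let G be a chordal graph and let T₀ be any tree-partition of G. If T is obtained from T₀ by splitting each bag into the connected components of the subgraph of G it induces, then the quotient graph of T is again a forest. -/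
open SimpleGraph

namespace TPW

variable {V : Type*} {G : SimpleGraph V}

open SimpleGraph.Walk List

lemma rev_tail_rev {α : Type*} (l : List α) : l.reverse.tail.reverse = l.dropLast := by
  induction l using List.reverseRecOn with
  | nil => simp
  | append_singleton l a ih => simp

lemma support_eq_map_range {u v : V} (p : G.Walk u v) :
    p.support = (List.range (p.length + 1)).map p.getVert := by
  induction p with
  | nil => simp [getVert]
  | @cons a b c h q ih =>
    rw [support_cons, ih]
    conv_rhs => rw [Walk.length_cons, List.range_succ_eq_map]
    rw [List.map_cons, List.map_map]
    congr 1

lemma edges_eq_map_range {u v : V} (p : G.Walk u v) :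
    p.edges = (List.range p.length).map (fun i => s(p.getVert i, p.getVert (i + 1))) := by
  induction p with
  | nil => simp
  | @cons a b c h q ih =>
    rw [edges_cons, ih]
    conv_rhs => rw [Walk.length_cons, List.range_succ_eq_map]
    rw [List.map_cons, List.map_map]
    congr 1
    show s(a,b) = s((Walk.cons h q).getVert 0, (Walk.cons h q).getVert (0+1))
    rw [Walk.getVert_cons_succ, Walk.getVert_zero, Walk.getVert_zero]

lemma support_tail_eq_map {u v : V} (p : G.Walk u v) :
    p.support.tail = (List.range p.length).map (fun i => p.getVert (i + 1)) := by
  rw [support_eq_map_range, List.range_succ_eq_map]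
  simp [List.map_map, Function.comp]

lemma support_tail_dropLast_eq_map {u v : V} (p : G.Walk u v) :
    p.support.tail.dropLast = (List.range (p.length - 1)).map (fun i => p.getVert (i + 1)) := by
  rw [support_tail_eq_map]
  rcases Nat.eq_zero_or_pos p.length with h | h
  · simp [h]
  · obtain ⟨m, hm⟩ : ∃ m, p.length = m + 1 := ⟨p.length - 1, by omega⟩
    rw [hm, List.range_succ, List.map_append]
    simp

lemma eq_of_length_zero {u v : V} {p : G.Walk u v} (h : p.length = 0) : u = v := by
  have := p.getVert_of_length_le (i := 0) (by omega)
  rwa [Walk.getVert_zero] at this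

lemma end_mem_support_tail {u v : V} (p : G.Walk u v) (h : 0 < p.length) :
    v ∈ p.support.tail := by
  rw [support_tail_eq_map]
  refine List.mem_map.mpr ⟨p.length - 1, List.mem_range.mpr (by omega), ?_⟩
  rw [show p.length - 1 + 1 = p.length by omega, Walk.getVert_length]

lemma mem_support_tail_of_mem {u x : V} {p : G.Walk u u} (h : 0 < p.length)
    (hx : x ∈ p.support) : x ∈ p.support.tail := by
  rw [support_eq_cons] at hx
  rcases List.mem_cons.mp hx with rfl | hx
  · exact end_mem_support_tail p h
  · exact hx

lemma cycle_getVert_inj {u : V} {p : G.Walk u u} (hp : p.IsCycle) {i j : ℕ}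
    (hi : i ≤ p.length) (hj : j ≤ p.length) (h : p.getVert i = p.getVert j) :
    i = j ∨ (i = 0 ∧ j = p.length) ∨ (j = 0 ∧ i = p.length) := by
  have hnd : p.support.tail.Nodup := hp.support_nodup
  rw [support_tail_eq_map] at hnd
  have hinj : ∀ a ∈ List.range p.length, ∀ b ∈ List.range p.length,
      p.getVert (a + 1) = p.getVert (b + 1) → a = b := by
    intro a ha b hb hab
    exact (List.inj_on_of_nodup_map hnd) ha hb hab
  rcases Nat.eq_zero_or_pos i with rfl | hi0
  · rcases Nat.eq_zero_or_pos j with rfl | hj0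
    · left; rfl
    · rcases Nat.eq_or_lt_of_le hj with rfl | hjlt
      · right; left; exact ⟨rfl, rfl⟩
      · -- getVert 0 = getVert p.length, so getVert p.length = getVert j with both ≥ 1
        exfalso
        have h0 : p.getVert p.length = p.getVert j := by
          rw [Walk.getVert_length]
          exact p.getVert_zero.symm.trans h
        have hlenpos : 0 < p.length := lt_of_lt_of_le hj0 hj
        have := hinj (p.length - 1) (List.mem_range.mpr (by omega)) (j - 1)
          (List.mem_range.mpr (by omega)) (by
            rw [show p.length - 1 + 1 = p.length by omega, show j - 1 + 1 = j by omega]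
            exact h0)
        omega
  · rcases Nat.eq_zero_or_pos j with rfl | hj0
    · rcases Nat.eq_or_lt_of_le hi with rfl | hilt
      · right; right; exact ⟨rfl, rfl⟩
      · exfalso
        have h0 : p.getVert i = p.getVert p.length := by
          rw [Walk.getVert_length]
          exact h.trans p.getVert_zero
        have hlenpos : 0 < p.length := lt_of_lt_of_le hi0 hi
        have := hinj (i - 1) (List.mem_range.mpr (by omega)) (p.length - 1)
          (List.mem_range.mpr (by omega)) (by
            rw [show p.length - 1 + 1 = p.length by omega, show i - 1 + 1 = i by omega]
            exact h0)
        omega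
    · left
      have := hinj (i - 1) (List.mem_range.mpr (by omega)) (j - 1)
        (List.mem_range.mpr (by omega)) (by
          rw [show i - 1 + 1 = i by omega, show j - 1 + 1 = j by omega]; exact h)
      omega








lemma mem_edges_of_length_one {u v : V} {p : G.Walk u v} (h : p.length = 1) :
    s(u, v) ∈ p.edges := by
  cases p with
  | nil => simp at h
  | cons had r =>
    have h0 : r.length = 0 := by simpa using h
    have := eq_of_length_zero h0
    subst this
    simp

lemma length_eq_one_of_mem_edges {x u : V} {t : G.Walk u x} (ht : t.IsPath)
    (hm : s(x, u) ∈ t.edges) : t.length = 1 := by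
  cases t with
  | nil => simp at hm
  | @cons _ z _ h' r =>
    rw [Walk.edges_cons] at hm
    rcases List.mem_cons.mp hm with heq | hmem
    · rw [Sym2.eq_iff] at heq
      rcases heq with ⟨rfl, rfl⟩ | ⟨rfl, -⟩
      · exact absurd rfl h'.ne
      · -- r : Walk x x is a path, so length 0
        have hr : r.length = 0 := by
          by_contra h0
          have h1 : x ∈ r.support.tail := end_mem_support_tail r (by omega)
          have h2 := ((Walk.cons_isPath_iff _ _).mp ht).1.support_nodup
          rw [Walk.support_eq_cons] at h2
          exact (List.nodup_cons.mp h2).1 h1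
        simp [hr]
    · exfalso
      have : u ∈ r.support := Walk.snd_mem_support_of_mem_edges r hmem
      exact ((Walk.cons_isPath_iff _ _).mp ht).2 this

lemma isPath_of_no_spur (hg : G.IsAcyclic) {a b : V} (p : G.Walk a b)
    (hsp : ∀ k, 0 < k → k < p.length → p.getVert (k - 1) ≠ p.getVert (k + 1)) :
    p.IsPath := by
  classical
  induction p with
  | nil => exact Walk.IsPath.nil
  | @cons a v b h q ih =>
    have hq : q.IsPath := by
      apply ih
      intro k hk hk'
      have h2 := hsp (k + 1) (by omega) (by rw [Walk.length_cons]; omega)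
      have e1 : (Walk.cons h q).getVert (k + 1 - 1) = q.getVert (k - 1) := by
        rw [show k + 1 - 1 = (k - 1) + 1 by omega, Walk.getVert_cons_succ]
      have e2 : (Walk.cons h q).getVert (k + 1 + 1) = q.getVert (k + 1) := by
        rw [Walk.getVert_cons_succ]
      rw [e1, e2] at h2
      exact h2
    refine (Walk.cons_isPath_iff h q).mpr ⟨hq, ?_⟩
    intro hu
    have hlen : q.length ≠ 0 := by
      intro h0
      have : a ∈ q.support := hu
      rw [support_eq_map_range, h0] at this
      simp at this
      exact h.ne this
    have hne1 : a ≠ q.getVert 1 := by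
      have h2 := hsp 1 one_pos (by rw [Walk.length_cons]; omega)
      have e1 : (Walk.cons h q).getVert 0 = a := Walk.getVert_zero _
      have e2 : (Walk.cons h q).getVert 2 = q.getVert 1 := Walk.getVert_cons_succ _ _
      rw [show (1:ℕ) - 1 = 0 from rfl] at h2
      rw [e1, show (1:ℕ)+1 = 2 from rfl, e2] at h2
      exact h2
    have htp : (q.takeUntil a hu).IsPath := hq.takeUntil hu
    refine hg _ ((Walk.cons_isCycle_iff (q.takeUntil a hu) h).mpr ⟨htp, ?_⟩)
    intro hmem
    have h1 : (q.takeUntil a hu).length = 1 := length_eq_one_of_mem_edges htp hmem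
    have hspec := q.take_spec hu
    have : q.getVert 1 = a := by
      have := congrArg (fun w => Walk.getVert w 1) hspec
      rw [← this, Walk.getVert_append, h1]
      simp
    exact hne1 this.symm

lemma exists_spur (hg : G.IsAcyclic) {u : V} (c : G.Walk u u) (hpos : 0 < c.length) :
    ∃ k, 0 < k ∧ k < c.length ∧ c.getVert (k - 1) = c.getVert (k + 1) := by
  by_contra hcon
  push_neg at hcon
  have hp : c.IsPath := isPath_of_no_spur hg c hcon
  have h1 : u ∈ c.support.tail := end_mem_support_tail c hpos
  have h2 := hp.support_nodup
  rw [Walk.support_eq_cons] at h2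
  exact (List.nodup_cons.mp h2).1 h1




lemma length_rotate [DecidableEq V] {u x : V} (c : G.Walk u u) (hx : x ∈ c.support) :
    (c.rotate x hx).length = c.length := by
  classical
  have h1 := congrArg Walk.length (c.take_spec hx)
  rw [Walk.length_append] at h1
  show ((c.dropUntil x hx).append (c.takeUntil x hx)).length = c.length
  rw [Walk.length_append]
  omega

lemma mem_support_rotate [DecidableEq V] {u x y : V} (c : G.Walk u u) (hx : x ∈ c.support)
    (hpos : 0 < c.length) (hy : y ∈ c.support) : y ∈ (c.rotate x hx).support := by
  classical
  have h1 : y ∈ c.support.tail := mem_support_tail_of_mem hpos hy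
  have h2 := (Walk.support_rotate c x hx).mem_iff.mpr h1
  exact List.mem_of_mem_tail h2

lemma mem_support_of_rotate [DecidableEq V] {u x y : V} (c : G.Walk u u) (hx : x ∈ c.support)
    (hposr : 0 < (c.rotate x hx).length) (hy : y ∈ (c.rotate x hx).support) : y ∈ c.support := by
  classical
  have h1 : y ∈ (c.rotate x hx).support.tail := mem_support_tail_of_mem hposr hy
  have h2 := (Walk.support_rotate c x hx).mem_iff.mp h1
  exact List.mem_of_mem_tail h2

lemma cycle_shortcut {u x y : V} (c : G.Walk u u) (hc : c.IsCycle) (hx : x ∈ c.support)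
    (hy : y ∈ c.support) (hadj : G.Adj x y) (he : s(x, y) ∉ c.edges) :
    ∃ (w : V) (d : G.Walk w w), d.IsCycle ∧ d.length < c.length := by
  classical
  have hpos : 0 < c.length := by have := hc.three_le_length; omega
  set c' := c.rotate x hx with hc'def
  have hc' : c'.IsCycle := hc.rotate hx
  have hlen' : c'.length = c.length := length_rotate c hx
  have hy' : y ∈ c'.support := mem_support_rotate c hx hpos hy
  have hedges : ∀ e, e ∈ c'.edges ↔ e ∈ c.edges := fun e => (Walk.rotate_edges c x hx).mem_iff
  set q := c'.takeUntil y hy' with hq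
  set r := c'.dropUntil y hy' with hr
  have hspec : q.append r = c' := c'.take_spec hy'
  have hsupp : c'.support.tail = q.support.tail ++ r.support.tail := by
    have h1 : c'.support = q.support ++ r.support.tail := by
      rw [← hspec, Walk.support_append]
    rw [h1, Walk.support_eq_cons (p := q)]
    rfl
  have hnd := hc'.support_nodup
  rw [hsupp] at hnd
  have hnd2 := List.nodup_append.mp hnd
  have hyx : y ≠ x := hadj.ne.symm
  have hrpos : 0 < r.length := by
    rcases Nat.eq_zero_or_pos r.length with h0 | h0
    · exact absurd (eq_of_length_zero h0) hyx
    · exact h0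
  have hxr : x ∈ r.support.tail := end_mem_support_tail r hrpos
  have hxq : x ∉ q.support.tail := fun hmem => hnd2.2.2 x hmem x hxr rfl
  have hqp : q.IsPath := by
    rw [Walk.isPath_def, Walk.support_eq_cons]
    exact List.nodup_cons.mpr ⟨hxq, hnd2.1⟩
  have hqe : s(y, x) ∉ q.edges := by
    intro hmem
    have := Walk.edges_takeUntil_subset c' hy' hmem
    rw [hedges] at this
    rw [Sym2.eq_swap] at this
    exact he this
  refine ⟨y, Walk.cons hadj.symm q, (Walk.cons_isCycle_iff q hadj.symm).mpr ⟨hqp, hqe⟩, ?_⟩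
  have hr2 : 2 ≤ r.length := by
    rcases Nat.lt_or_ge r.length 2 with h2 | h2
    · exfalso
      have hr1 : r.length = 1 := by omega
      have := mem_edges_of_length_one (p := r) hr1
      have h3 := Walk.edges_dropUntil_subset c' hy' this
      rw [hedges, Sym2.eq_swap] at h3
      exact he h3
    · exact h2
  have hql : q.length + r.length = c.length := by
    have := congrArg Walk.length hspec
    rw [Walk.length_append] at this
    omega
  rw [Walk.length_cons]
  omega

lemma exists_chordless_cycle (h : ¬G.IsAcyclic) :
    ∃ (u : V) (c : G.Walk u u), c.IsCycle ∧
      ∀ x y, x ∈ c.support → y ∈ c.support → G.Adj x y → s(x, y) ∈ c.edges := by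
  classical
  unfold SimpleGraph.IsAcyclic at h
  push_neg at h
  obtain ⟨v, c0, hc0⟩ := h
  set S := {n | ∃ (w : V) (c : G.Walk w w), c.IsCycle ∧ c.length = n} with hSdef
  have hS : S.Nonempty := ⟨c0.length, v, c0, hc0, rfl⟩
  obtain ⟨w, c, hc, hlen⟩ := Nat.sInf_mem hS
  refine ⟨w, c, hc, ?_⟩
  by_contra hcon
  push_neg at hcon
  obtain ⟨x, y, hx, hy, hadj, hne⟩ := hcon
  obtain ⟨w', d, hd, hdl⟩ := cycle_shortcut c hc hx hy hadj hne
  have hle : sInf S ≤ d.length := Nat.sInf_le ⟨w', d, hd, rfl⟩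
  omega

lemma partner_unique {z x w w' : V} {q : G.Walk z x} (hq : q.IsPath)
    (h1 : s(x, w) ∈ q.edges) (h2 : s(x, w') ∈ q.edges) : w = w' := by
  induction q with
  | nil => simp at h1
  | @cons z z1 x h' r ih =>
    have hpath := (Walk.cons_isPath_iff h' r).mp hq
    have key : ∀ w0, s(x, w0) = s(z, z1) → x = z1 ∧ w0 = z := by
      intro w0 heq
      rw [Sym2.eq_iff] at heq
      rcases heq with ⟨rfl, rfl⟩ | ⟨h3, rfl⟩
      · exact absurd (r.end_mem_support) hpath.2
      · exact ⟨h3, rfl⟩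
    have hlen : ∀ w0, s(x, w0) = s(z, z1) → r.length = 0 := by
      intro w0 heq
      obtain ⟨hxz1, -⟩ := key w0 heq
      subst hxz1
      by_contra h0
      have hmem : x ∈ r.support.tail := end_mem_support_tail r (by omega)
      have h2' := hpath.1.support_nodup
      rw [Walk.support_eq_cons] at h2'
      exact (List.nodup_cons.mp h2').1 hmem
    rw [Walk.edges_cons] at h1 h2
    rcases List.mem_cons.mp h1 with he1 | he1
    · rcases List.mem_cons.mp h2 with he2 | he2
      · rw [(key w he1).2, (key w' he2).2]
      · exfalso
        have h0 := hlen w he1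
        have : r.edges.length = r.length := r.length_edges
        rw [h0] at this
        rw [List.length_eq_zero_iff.mp this] at he2
        simp at he2
    · rcases List.mem_cons.mp h2 with he2 | he2
      · exfalso
        have h0 := hlen w' he2
        have : r.edges.length = r.length := r.length_edges
        rw [h0] at this
        rw [List.length_eq_zero_iff.mp this] at he1
        simp at he1
      · exact ih hpath.1 he1 he2

lemma cycle_at_most_two_partners {u x a b d : V} {c : G.Walk u u} (hc : c.IsCycle)
    (ha : s(x, a) ∈ c.edges) (hb : s(x, b) ∈ c.edges) (hd : s(x, d) ∈ c.edges)
    (hab : a ≠ b) (had : a ≠ d) (hbd : b ≠ d) : False := by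
  classical
  have hx : x ∈ c.support := c.fst_mem_support_of_mem_edges ha
  set c' := c.rotate x hx with hc'def
  have hc' : c'.IsCycle := hc.rotate hx
  have hedges : ∀ e, e ∈ c'.edges ↔ e ∈ c.edges := fun e => (Walk.rotate_edges c x hx).mem_iff
  clear_value c'
  cases c' with
  | nil => exact hc'.ne_nil rfl
  | @cons _ z _ hadj r =>
    have hrp : r.IsPath := ((Walk.cons_isCycle_iff r hadj).mp hc').1
    have key : ∀ w0, s(x, w0) ∈ c.edges → w0 = z ∨ s(x, w0) ∈ r.edges := by
      intro w0 hw0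
      have := (hedges _).mpr hw0
      rw [Walk.edges_cons] at this
      rcases List.mem_cons.mp this with heq | hmem
      · rw [Sym2.eq_iff] at heq
        rcases heq with ⟨-, rfl⟩ | ⟨rfl, rfl⟩
        · exact Or.inl rfl
        · exact absurd rfl hadj.ne
      · exact Or.inr hmem
    rcases key a ha with h1 | h1 <;> rcases key b hb with h2 | h2 <;>
      rcases key d hd with h3 | h3
    · exact hab (h1.trans h2.symm)
    · exact hab (h1.trans h2.symm)
    · exact had (h1.trans h3.symm)
    · exact hbd (partner_unique hrp h2 h3)
    · exact hbd (h2.trans h3.symm)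
    · exact had (partner_unique hrp h1 h3)
    · exact hab (partner_unique hrp h1 h2)
    · exact hab (partner_unique hrp h1 h2)

lemma length_drop {u v : V} (p : G.Walk u v) (n : ℕ) : (p.drop n).length = p.length - n := by
  induction p generalizing n with
  | nil => cases n <;> simp [Walk.drop]
  | cons h q ih =>
    cases n with
    | zero => simp [Walk.drop]
    | succ n =>
      show (q.drop n).length = _
      rw [ih, Walk.length_cons]
      omega

lemma support_drop_subset {u v : V} (p : G.Walk u v) (n : ℕ) :
    (p.drop n).support ⊆ p.support := by
  induction p generalizing n with
  | nil => cases n <;> exact fun x hx => hx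
  | cons h q ih =>
    cases n with
    | zero => simp [Walk.drop]
    | succ n =>
      intro x hx
      show x ∈ (Walk.cons h q).support
      rw [Walk.support_cons]
      have : x ∈ (q.drop n).support := by
        exact hx
      exact List.mem_cons.mpr (Or.inr (ih n this))

lemma peel {u v : V} (W : G.Walk u v) (h2 : 2 ≤ W.length) :
    ∃ (x y : V) (P : G.Walk x y), G.Adj u x ∧ G.Adj y v ∧ x = W.getVert 1 ∧
      y = W.getVert (W.length - 1) ∧ P.support = W.support.tail.dropLast := by
  have hnn : ¬W.Nil := by
    rw [Walk.not_nil_iff_lt_length]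
    omega
  set T := W.tail with hT
  have hTlen : T.length + 1 = W.length := Walk.length_tail_add_one hnn
  have hTnn : ¬T.Nil := by rw [Walk.not_nil_iff_lt_length]; omega
  have hTrnn : ¬T.reverse.Nil := by rw [Walk.not_nil_iff_lt_length, Walk.length_reverse]; omega
  refine ⟨W.getVert 1, T.reverse.getVert 1, (T.reverse.tail).reverse,
    W.adj_snd hnn, (T.reverse.adj_snd hTrnn).symm, rfl, ?_, ?_⟩
  · rw [Walk.getVert_reverse]
    rw [Walk.getVert_tail]
    congr 1
    omega
  · rw [Walk.support_reverse, Walk.support_tail_of_not_nil _ hTrnn, Walk.support_reverse,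
      rev_tail_rev, Walk.support_tail_of_not_nil _ hnn]

lemma isPath_append {u v w : V} {p : G.Walk u v} {q : G.Walk v w} (hp : p.IsPath)
    (hq : q.IsPath) (hshare : ∀ x, x ∈ p.support → x ∈ q.support → x = v) :
    (p.append q).IsPath := by
  rw [Walk.isPath_def, Walk.support_append]
  refine List.Nodup.append hp.support_nodup
    ((List.tail_sublist _).nodup hq.support_nodup) ?_
  intro x hxp hxq
  have hxq' : x ∈ q.support := List.mem_of_mem_tail hxq
  have hxv := hshare x hxp hxq'
  subst hxv
  have h2 := hq.support_nodup
  rw [Walk.support_eq_cons] at h2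
  exact (List.nodup_cons.mp h2).1 hxq

structure Quad (G : SimpleGraph V) (C0 C1 C2 C3 : Set V) where
  a0 : V
  b0 : V
  a1 : V
  b1 : V
  a2 : V
  b2 : V
  a3 : V
  b3 : V
  p0 : G.Walk a0 b0
  p1 : G.Walk a1 b1
  p2 : G.Walk a2 b2
  p3 : G.Walk a3 b3
  h0 : ∀ x ∈ p0.support, x ∈ C0
  h1 : ∀ x ∈ p1.support, x ∈ C1
  h2 : ∀ x ∈ p2.support, x ∈ C2
  h3 : ∀ x ∈ p3.support, x ∈ C3
  e0 : G.Adj b0 a1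
  e1 : G.Adj b1 a2
  e2 : G.Adj b2 a3
  e3 : G.Adj b3 a0

variable {C0 C1 C2 C3 : Set V}

def Quad.measure (q : Quad G C0 C1 C2 C3) : ℕ :=
  q.p0.length + q.p1.length + q.p2.length + q.p3.length

def Quad.rot (q : Quad G C0 C1 C2 C3) : Quad G C1 C2 C3 C0 :=
  ⟨q.a1, q.b1, q.a2, q.b2, q.a3, q.b3, q.a0, q.b0, q.p1, q.p2, q.p3, q.p0,
    q.h1, q.h2, q.h3, q.h0, q.e1, q.e2, q.e3, q.e0⟩

lemma Quad.measure_rot (q : Quad G C0 C1 C2 C3) : q.rot.measure = q.measure := by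
  simp only [Quad.measure, Quad.rot]
  omega

lemma surgery_same (q : Quad G C0 C1 C2 C3) {x y : V} (hx : x ∈ q.p0.support)
    (hy : y ∈ q.p0.support) (hadj : G.Adj x y) (hne : s(x, y) ∉ q.p0.edges) :
    ∃ q' : Quad G C0 C1 C2 C3, q'.measure < q.measure := by
  classical
  have hsplit1 : (q.p0.takeUntil x hx).length + (q.p0.dropUntil x hx).length = q.p0.length := by
    have := congrArg Walk.length (q.p0.take_spec hx)
    rwa [Walk.length_append] at this
  by_cases hyd : y ∈ (q.p0.dropUntil x hx).support
  · set dx := q.p0.dropUntil x hx with hdx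
    set tx := q.p0.takeUntil x hx with htx
    have hsplit2 : (dx.takeUntil y hyd).length + (dx.dropUntil y hyd).length = dx.length := by
      have := congrArg Walk.length (dx.take_spec hyd)
      rwa [Walk.length_append] at this
    have hty2 : 2 ≤ (dx.takeUntil y hyd).length := by
      rcases Nat.lt_or_ge (dx.takeUntil y hyd).length 2 with hlt | hge
      · exfalso
        rcases (by omega : (dx.takeUntil y hyd).length = 0 ∨ (dx.takeUntil y hyd).length = 1) with h0 | h1
        · exact hadj.ne (eq_of_length_zero h0)
        · exact hne (Walk.edges_dropUntil_subset _ hx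
            (Walk.edges_takeUntil_subset _ hyd (mem_edges_of_length_one h1)))
      · exact hge
    refine ⟨⟨q.a0, q.b0, q.a1, q.b1, q.a2, q.b2, q.a3, q.b3,
      tx.append (Walk.cons hadj (dx.dropUntil y hyd)), q.p1, q.p2, q.p3,
      ?_, q.h1, q.h2, q.h3, q.e0, q.e1, q.e2, q.e3⟩, ?_⟩
    · intro z hz
      rw [Walk.mem_support_append_iff] at hz
      rcases hz with hz | hz
      · exact q.h0 z (Walk.support_takeUntil_subset _ hx hz)
      · rw [Walk.support_cons] at hz
        rcases List.mem_cons.mp hz with rfl | hz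
        · exact q.h0 z hx
        · exact q.h0 z (Walk.support_dropUntil_subset _ hx
            (Walk.support_dropUntil_subset _ hyd hz))
    · simp only [Quad.measure, Walk.length_append, Walk.length_cons]
      omega
  · have hyt : y ∈ (q.p0.takeUntil x hx).support := by
      have := hy
      rw [← q.p0.take_spec hx, Walk.mem_support_append_iff] at this
      tauto
    set tx := q.p0.takeUntil x hx with htx
    have hsplit2 : (tx.takeUntil y hyt).length + (tx.dropUntil y hyt).length = tx.length := by
      have := congrArg Walk.length (tx.take_spec hyt)
      rwa [Walk.length_append] at this
    have hry2 : 2 ≤ (tx.dropUntil y hyt).length := by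
      rcases Nat.lt_or_ge (tx.dropUntil y hyt).length 2 with hlt | hge
      · exfalso
        rcases (by omega : (tx.dropUntil y hyt).length = 0 ∨ (tx.dropUntil y hyt).length = 1) with h0 | h1
        · exact hadj.ne (eq_of_length_zero h0).symm
        · refine hne ?_
          have := Walk.edges_takeUntil_subset _ hx
            (Walk.edges_dropUntil_subset _ hyt (mem_edges_of_length_one h1))
          rwa [Sym2.eq_swap] at this
      · exact hge
    refine ⟨⟨q.a0, q.b0, q.a1, q.b1, q.a2, q.b2, q.a3, q.b3,
      (tx.takeUntil y hyt).append (Walk.cons hadj.symm (q.p0.dropUntil x hx)),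
      q.p1, q.p2, q.p3, ?_, q.h1, q.h2, q.h3, q.e0, q.e1, q.e2, q.e3⟩, ?_⟩
    · intro z hz
      rw [Walk.mem_support_append_iff] at hz
      rcases hz with hz | hz
      · exact q.h0 z (Walk.support_takeUntil_subset _ hx
          (Walk.support_takeUntil_subset _ hyt hz))
      · rw [Walk.support_cons] at hz
        rcases List.mem_cons.mp hz with rfl | hz
        · exact q.h0 z (Walk.support_takeUntil_subset _ hx hyt)
        · exact q.h0 z (Walk.support_dropUntil_subset _ hx hz)
    · simp only [Quad.measure, Walk.length_append, Walk.length_cons]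
      omega

lemma surgery_adj (q : Quad G C0 C1 C2 C3) {x y : V} (hx : x ∈ q.p0.support)
    (hy : y ∈ q.p1.support) (hadj : G.Adj x y) (hne : ¬(x = q.b0 ∧ y = q.a1)) :
    ∃ q' : Quad G C0 C1 C2 C3, q'.measure < q.measure := by
  classical
  have hsplit0 : (q.p0.takeUntil x hx).length + (q.p0.dropUntil x hx).length = q.p0.length := by
    have := congrArg Walk.length (q.p0.take_spec hx)
    rwa [Walk.length_append] at this
  have hsplit1 : (q.p1.takeUntil y hy).length + (q.p1.dropUntil y hy).length = q.p1.length := by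
    have := congrArg Walk.length (q.p1.take_spec hy)
    rwa [Walk.length_append] at this
  have hstrict : 0 < (q.p0.dropUntil x hx).length ∨ 0 < (q.p1.takeUntil y hy).length := by
    by_contra hcon
    push_neg at hcon
    obtain ⟨hc1, hc2⟩ := hcon
    have hx0 : x = q.b0 := eq_of_length_zero (Nat.le_zero.mp hc1)
    have hy0 : q.a1 = y := eq_of_length_zero (Nat.le_zero.mp hc2)
    exact hne ⟨hx0, hy0.symm⟩
  refine ⟨⟨q.a0, x, y, q.b1, q.a2, q.b2, q.a3, q.b3,
    q.p0.takeUntil x hx, q.p1.dropUntil y hy, q.p2, q.p3,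
    fun z hz => q.h0 z (Walk.support_takeUntil_subset _ hx hz),
    fun z hz => q.h1 z (Walk.support_dropUntil_subset _ hy hz),
    q.h2, q.h3, hadj, q.e1, q.e2, q.e3⟩, ?_⟩
  simp only [Quad.measure]
  omega

lemma chordal_no_chordless_cycle {W : Type} {G : SimpleGraph W} (hch : IsChordal G)
    {v : W} (w : G.Walk v v) (hw : w.IsCycle)
    (hchord : ∀ x y, x ∈ w.support → y ∈ w.support → G.Adj x y → s(x, y) ∈ w.edges)
    (h4 : 4 ≤ w.length) : False := by
  obtain ⟨m, hm⟩ : ∃ m, w.length = m + 2 := ⟨w.length - 2, by omega⟩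
  refine (hch w.length h4).false ?_
  rw [hm]
  have hmem : ∀ i : Fin (m + 2), w.getVert i.val ∈ w.support := by
    intro i
    rw [support_eq_map_range]
    exact List.mem_map.mpr ⟨i.val, List.mem_range.mpr (by omega), rfl⟩
  have key : ∀ (a : Fin (m + 2)) (t : ℕ), t ≤ w.length → w.getVert t = w.getVert a.val →
      t = a.val ∨ (t = w.length ∧ a.val = 0) := by
    intro a t ht hEq
    have hav : a.val ≤ w.length := by omega
    rcases cycle_getVert_inj hw ht hav hEq with h | ⟨h1, h2⟩ | ⟨h1, h2⟩
    · exact Or.inl h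
    · exfalso; omega
    · exact Or.inr ⟨h2, h1⟩
  have succ_adj : ∀ (a b : Fin (m + 2)), b = a + 1 → G.Adj (w.getVert a.val) (w.getVert b.val) := by
    intro a b hb
    subst hb
    rw [Fin.val_add_one]
    split_ifs with hlast
    · subst hlast
      rw [Fin.val_last]
      have := w.adj_getVert_succ (i := w.length - 1) (by omega)
      rw [show w.length - 1 + 1 = w.length by omega, Walk.getVert_length] at this
      rw [show m + 1 = w.length - 1 by omega, Walk.getVert_zero]
      exact this
    · exact w.adj_getVert_succ (by
        have : a.val < m + 2 := a.isLt
        have : a.val ≠ m + 1 := fun hc => hlast (Fin.ext (by rw [Fin.val_last]; exact hc))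
        omega)
  refine ⟨⟨fun i => w.getVert i.val, ?_⟩, ?_⟩
  · intro i j hEq
    rcases cycle_getVert_inj hw (by omega : i.val ≤ w.length) (by omega : j.val ≤ w.length)
      hEq with h | ⟨h1, h2⟩ | ⟨h1, h2⟩
    · exact Fin.ext h
    · exfalso; have := j.isLt; omega
    · exfalso; have := i.isLt; omega
  · intro i j
    show G.Adj (w.getVert i.val) (w.getVert j.val) ↔ _
    constructor
    · intro hadj
      have hmemE := hchord _ _ (hmem i) (hmem j) hadj
      rw [edges_eq_map_range] at hmemE
      obtain ⟨t, ht, heq⟩ := List.mem_map.mp hmemE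
      have htlt : t < w.length := List.mem_range.mp ht
      rw [Sym2.eq_iff] at heq
      rw [SimpleGraph.cycleGraph_adj]
      rcases heq with ⟨h1, h2⟩ | ⟨h1, h2⟩
      · -- getVert t = getVert i, getVert (t+1) = getVert j : j = i + 1
        have hti : t = i.val := by
          rcases key i t (by omega) h1 with h | ⟨h, -⟩
          · exact h
          · omega
        have hj : j = i + 1 := by
          rcases key j (t + 1) (by omega) h2 with h | ⟨h, h0⟩
          · refine Fin.ext ?_
            rw [Fin.val_add_one]
            split_ifs with hlast
            · exfalso
              have : i.val = m + 1 := by rw [← Fin.val_last (n := m + 1), hlast]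
              have := j.isLt
              omega
            · omega
          · refine Fin.ext ?_
            rw [Fin.val_add_one]
            split_ifs with hlast
            · omega
            · exfalso
              have : i.val ≠ m + 1 := fun hc => hlast (Fin.ext (by rw [Fin.val_last]; exact hc))
              omega
        right
        rw [hj]
        exact add_sub_cancel_left i 1
      · -- getVert t = getVert j, getVert (t+1) = getVert i : i = j + 1
        have htj : t = j.val := by
          rcases key j t (by omega) h1 with h | ⟨h, -⟩
          · exact h
          · omega
        have hi : i = j + 1 := by
          rcases key i (t + 1) (by omega) h2 with h | ⟨h, h0⟩
          · refine Fin.ext ?_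
            rw [Fin.val_add_one]
            split_ifs with hlast
            · exfalso
              have : j.val = m + 1 := by rw [← Fin.val_last (n := m + 1), hlast]
              have := i.isLt
              omega
            · omega
          · refine Fin.ext ?_
            rw [Fin.val_add_one]
            split_ifs with hlast
            · omega
            · exfalso
              have : j.val ≠ m + 1 := fun hc => hlast (Fin.ext (by rw [Fin.val_last]; exact hc))
              omega
        left
        rw [hi]
        exact add_sub_cancel_left j 1
    · intro hadj
      rw [SimpleGraph.cycleGraph_adj] at hadj
      rcases hadj with h | h
      · exact (succ_adj j i (by rw [← h]; exact (add_sub_cancel _ _).symm)).symm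
      · exact succ_adj i j (by rw [← h]; exact (add_sub_cancel _ _).symm)

theorem quad_false {W : Type} {G : SimpleGraph W} (hch : IsChordal G)
    {C0 C1 C2 C3 : Set W}
    (d01 : ∀ x, x ∈ C0 → x ∈ C1 → False)
    (d02 : ∀ x, x ∈ C0 → x ∈ C2 → False)
    (d03 : ∀ x, x ∈ C0 → x ∈ C3 → False)
    (d12 : ∀ x, x ∈ C1 → x ∈ C2 → False)
    (d13 : ∀ x, x ∈ C1 → x ∈ C3 → False)
    (d23 : ∀ x, x ∈ C2 → x ∈ C3 → False)
    (ne02 : ∀ x y, x ∈ C0 → y ∈ C2 → ¬G.Adj x y)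
    (ne13 : ∀ x y, x ∈ C1 → y ∈ C3 → ¬G.Adj x y)
    (q0 : Quad G C0 C1 C2 C3) : False := by
  classical
  set S := {n | ∃ q : Quad G C0 C1 C2 C3, q.measure = n} with hSdef
  have hS : S.Nonempty := ⟨q0.measure, q0, rfl⟩
  obtain ⟨qm, hqm⟩ := Nat.sInf_mem hS
  have hmin : ∀ q' : Quad G C0 C1 C2 C3, sInf S ≤ q'.measure := fun q' => Nat.sInf_le ⟨q', rfl⟩
  -- bypass to get paths
  set qb : Quad G C0 C1 C2 C3 := ⟨qm.a0, qm.b0, qm.a1, qm.b1, qm.a2, qm.b2, qm.a3, qm.b3,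
    qm.p0.bypass, qm.p1.bypass, qm.p2.bypass, qm.p3.bypass,
    fun z hz => qm.h0 z (Walk.support_bypass_subset _ hz),
    fun z hz => qm.h1 z (Walk.support_bypass_subset _ hz),
    fun z hz => qm.h2 z (Walk.support_bypass_subset _ hz),
    fun z hz => qm.h3 z (Walk.support_bypass_subset _ hz),
    qm.e0, qm.e1, qm.e2, qm.e3⟩ with hqbdef
  have hqble : qb.measure ≤ qm.measure := by
    simp only [Quad.measure, hqbdef]
    have h0 := Walk.length_bypass_le qm.p0
    have h1 := Walk.length_bypass_le qm.p1
    have h2 := Walk.length_bypass_le qm.p2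
    have h3 := Walk.length_bypass_le qm.p3
    exact Nat.add_le_add (Nat.add_le_add (Nat.add_le_add h0 h1) h2) h3
  have hminqb : ∀ q' : Quad G C0 C1 C2 C3, qb.measure ≤ q'.measure := by
    intro q'
    calc qb.measure ≤ qm.measure := hqble
    _ = sInf S := hqm
    _ ≤ q'.measure := hmin q'
  have hP0 : qb.p0.IsPath := Walk.bypass_isPath _
  have hP1 : qb.p1.IsPath := Walk.bypass_isPath _
  have hP2 : qb.p2.IsPath := Walk.bypass_isPath _
  have hP3 : qb.p3.IsPath := Walk.bypass_isPath _
  -- class memberships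
  have hm0 := qb.h0
  have hm1 := qb.h1
  have hm2 := qb.h2
  have hm3 := qb.h3
  have ha0 : qb.a0 ∈ C0 := hm0 _ (Walk.start_mem_support _)
  have hb0 : qb.b0 ∈ C0 := hm0 _ (Walk.end_mem_support _)
  have ha1 : qb.a1 ∈ C1 := hm1 _ (Walk.start_mem_support _)
  have hb1 : qb.b1 ∈ C1 := hm1 _ (Walk.end_mem_support _)
  have ha2 : qb.a2 ∈ C2 := hm2 _ (Walk.start_mem_support _)
  have hb2 : qb.b2 ∈ C2 := hm2 _ (Walk.end_mem_support _)
  have ha3 : qb.a3 ∈ C3 := hm3 _ (Walk.start_mem_support _)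
  have hb3 : qb.b3 ∈ C3 := hm3 _ (Walk.end_mem_support _)
  -- the closed walk
  set R : G.Walk qb.a0 qb.b3 :=
    qb.p0.append (Walk.cons qb.e0 (qb.p1.append (Walk.cons qb.e1
      (qb.p2.append (Walk.cons qb.e2 qb.p3))))) with hRdef
  set Wk : G.Walk qb.b3 qb.b3 := Walk.cons qb.e3 R with hWdef
  have hRsup : ∀ z, z ∈ R.support →
      z ∈ qb.p0.support ∨ z ∈ qb.p1.support ∨ z ∈ qb.p2.support ∨ z ∈ qb.p3.support := by
    intro z hz
    rw [hRdef, Walk.mem_support_append_iff] at hz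
    rcases hz with hz | hz
    · exact Or.inl hz
    · rw [Walk.support_cons] at hz
      rcases List.mem_cons.mp hz with rfl | hz
      · exact Or.inl (Walk.end_mem_support _)
      · rw [Walk.mem_support_append_iff] at hz
        rcases hz with hz | hz
        · exact Or.inr (Or.inl hz)
        · rw [Walk.support_cons] at hz
          rcases List.mem_cons.mp hz with rfl | hz
          · exact Or.inr (Or.inl (Walk.end_mem_support _))
          · rw [Walk.mem_support_append_iff] at hz
            rcases hz with hz | hz
            · exact Or.inr (Or.inr (Or.inl hz))
            · rw [Walk.support_cons] at hz
              rcases List.mem_cons.mp hz with rfl | hz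
              · exact Or.inr (Or.inr (Or.inl (Walk.end_mem_support _)))
              · exact Or.inr (Or.inr (Or.inr hz))
  have hWe : ∀ e, e ∈ Wk.edges ↔ (e ∈ qb.p0.edges ∨ e ∈ qb.p1.edges ∨ e ∈ qb.p2.edges ∨
      e ∈ qb.p3.edges ∨ e = s(qb.b0, qb.a1) ∨ e = s(qb.b1, qb.a2) ∨ e = s(qb.b2, qb.a3) ∨
      e = s(qb.b3, qb.a0)) := by
    intro e
    rw [hWdef, hRdef]
    simp only [Walk.edges_cons, Walk.edges_append, List.mem_cons, List.mem_append]
    tauto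
  -- R is a path
  have hq23 : (Walk.cons qb.e2 qb.p3).IsPath := by
    rw [Walk.cons_isPath_iff]
    exact ⟨hP3, fun hmem => d23 _ hb2 (hm3 _ hmem)⟩
  have hq2 : (qb.p2.append (Walk.cons qb.e2 qb.p3)).IsPath := by
    refine isPath_append hP2 hq23 ?_
    intro z hz1 hz2
    rw [Walk.support_cons] at hz2
    rcases List.mem_cons.mp hz2 with rfl | hz2
    · rfl
    · exact absurd (hm3 _ hz2) (fun h => d23 _ (hm2 _ hz1) h)
  have hq12 : (Walk.cons qb.e1 (qb.p2.append (Walk.cons qb.e2 qb.p3))).IsPath := by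
    rw [Walk.cons_isPath_iff]
    refine ⟨hq2, fun hmem => ?_⟩
    rw [Walk.mem_support_append_iff] at hmem
    rcases hmem with hz | hz
    · exact d12 _ hb1 (hm2 _ hz)
    · rw [Walk.support_cons] at hz
      rcases List.mem_cons.mp hz with heq | hz
      · exact d12 _ hb1 (heq ▸ hb2)
      · exact d13 _ hb1 (hm3 _ hz)
  have hq1 : (qb.p1.append (Walk.cons qb.e1 (qb.p2.append (Walk.cons qb.e2 qb.p3)))).IsPath := by
    refine isPath_append hP1 hq12 ?_
    intro z hz1 hz2
    rw [Walk.support_cons] at hz2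
    rcases List.mem_cons.mp hz2 with rfl | hz2
    · rfl
    · rw [Walk.mem_support_append_iff] at hz2
      rcases hz2 with hz | hz
      · exact absurd (hm2 _ hz) (fun h => d12 _ (hm1 _ hz1) h)
      · rw [Walk.support_cons] at hz
        rcases List.mem_cons.mp hz with heq | hz
        · exact absurd (heq ▸ hb2) (fun h => d12 _ (hm1 _ hz1) h)
        · exact absurd (hm3 _ hz) (fun h => d13 _ (hm1 _ hz1) h)
  have hq01 : (Walk.cons qb.e0 (qb.p1.append (Walk.cons qb.e1
      (qb.p2.append (Walk.cons qb.e2 qb.p3))))).IsPath := by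
    rw [Walk.cons_isPath_iff]
    refine ⟨hq1, fun hmem => ?_⟩
    rw [Walk.mem_support_append_iff] at hmem
    rcases hmem with hz | hz
    · exact d01 _ hb0 (hm1 _ hz)
    · rw [Walk.support_cons] at hz
      rcases List.mem_cons.mp hz with heq | hz
      · exact d01 _ hb0 (heq ▸ hb1)
      · rw [Walk.mem_support_append_iff] at hz
        rcases hz with hz | hz
        · exact d02 _ hb0 (hm2 _ hz)
        · rw [Walk.support_cons] at hz
          rcases List.mem_cons.mp hz with heq | hz
          · exact d02 _ hb0 (heq ▸ hb2)
          · exact d03 _ hb0 (hm3 _ hz)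
  have hRpath : R.IsPath := by
    rw [hRdef]
    refine isPath_append hP0 hq01 ?_
    intro z hz1 hz2
    rw [Walk.support_cons] at hz2
    rcases List.mem_cons.mp hz2 with rfl | hz2
    · rfl
    · exfalso
      rw [Walk.mem_support_append_iff] at hz2
      rcases hz2 with hz | hz
      · exact d01 _ (hm0 _ hz1) (hm1 _ hz)
      · rw [Walk.support_cons] at hz
        rcases List.mem_cons.mp hz with heq | hz
        · exact d01 _ (hm0 _ hz1) (heq ▸ hb1)
        · rw [Walk.mem_support_append_iff] at hz
          rcases hz with hz | hz
          · exact d02 _ (hm0 _ hz1) (hm2 _ hz)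
          · rw [Walk.support_cons] at hz
            rcases List.mem_cons.mp hz with heq | hz
            · exact d02 _ (hm0 _ hz1) (heq ▸ hb2)
            · exact d03 _ (hm0 _ hz1) (hm3 _ hz)
  have hRe : ∀ e, e ∈ R.edges ↔ (e ∈ qb.p0.edges ∨ e ∈ qb.p1.edges ∨ e ∈ qb.p2.edges ∨
      e ∈ qb.p3.edges ∨ e = s(qb.b0, qb.a1) ∨ e = s(qb.b1, qb.a2) ∨ e = s(qb.b2, qb.a3)) := by
    intro e
    rw [hRdef]
    simp only [Walk.edges_cons, Walk.edges_append, List.mem_cons, List.mem_append]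
    tauto
  have hRnotedge : s(qb.b3, qb.a0) ∉ R.edges := by
    intro hmem
    rw [hRe] at hmem
    rcases hmem with h | h | h | h | h | h | h
    · exact d03 _ (hm0 _ (Walk.fst_mem_support_of_mem_edges _ h)) hb3
    · exact d13 _ (hm1 _ (Walk.fst_mem_support_of_mem_edges _ h)) hb3
    · exact d23 _ (hm2 _ (Walk.fst_mem_support_of_mem_edges _ h)) hb3
    · exact d03 _ ha0 (hm3 _ (Walk.snd_mem_support_of_mem_edges _ h))
    · rw [Sym2.eq_iff] at h
      rcases h with ⟨h1, h2⟩ | ⟨h1, h2⟩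
      · exact d03 _ (h1 ▸ hb0) hb3
      · exact d13 _ (h1 ▸ ha1) hb3
    · rw [Sym2.eq_iff] at h
      rcases h with ⟨h1, h2⟩ | ⟨h1, h2⟩
      · exact d13 _ (h1 ▸ hb1) hb3
      · exact d23 _ (h1 ▸ ha2) hb3
    · rw [Sym2.eq_iff] at h
      rcases h with ⟨h1, h2⟩ | ⟨h1, h2⟩
      · exact d23 _ (h1 ▸ hb2) hb3
      · exact d02 _ ha0 (h2 ▸ hb2)
  have hcyc : Wk.IsCycle := by
    rw [hWdef]
    exact (Walk.cons_isCycle_iff R qb.e3).mpr ⟨hRpath, hRnotedge⟩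
  have hce0 : s(qb.b0, qb.a1) ∈ Wk.edges :=
    (hWe _).mpr (Or.inr (Or.inr (Or.inr (Or.inr (Or.inl rfl)))))
  have hce1 : s(qb.b1, qb.a2) ∈ Wk.edges :=
    (hWe _).mpr (Or.inr (Or.inr (Or.inr (Or.inr (Or.inr (Or.inl rfl))))))
  have hce2 : s(qb.b2, qb.a3) ∈ Wk.edges :=
    (hWe _).mpr (Or.inr (Or.inr (Or.inr (Or.inr (Or.inr (Or.inr (Or.inl rfl)))))))
  have hce3 : s(qb.b3, qb.a0) ∈ Wk.edges :=
    (hWe _).mpr (Or.inr (Or.inr (Or.inr (Or.inr (Or.inr (Or.inr (Or.inr rfl)))))))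
  have hWsup : ∀ z, z ∈ Wk.support →
      z ∈ qb.p0.support ∨ z ∈ qb.p1.support ∨ z ∈ qb.p2.support ∨ z ∈ qb.p3.support := by
    intro z hz
    rw [hWdef, Walk.support_cons] at hz
    rcases List.mem_cons.mp hz with rfl | hz
    · exact Or.inr (Or.inr (Or.inr (Walk.end_mem_support _)))
    · exact hRsup z hz
  have hchord : ∀ x y, x ∈ Wk.support → y ∈ Wk.support → G.Adj x y → s(x, y) ∈ Wk.edges := by
    intro x y hxW hyW hadj
    by_contra hnot
    have hx4 := hWsup x hxW
    have hy4 := hWsup y hyW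
    have finish0 : (∃ q' : Quad G C0 C1 C2 C3, q'.measure < qb.measure) → False := by
      rintro ⟨q', hq'⟩
      have := hminqb q'
      omega
    have finish1 : (∃ q' : Quad G C1 C2 C3 C0, q'.measure < qb.rot.measure) → False := by
      rintro ⟨q', hq'⟩
      refine finish0 ⟨q'.rot.rot.rot, ?_⟩
      rw [Quad.measure_rot, Quad.measure_rot, Quad.measure_rot]
      rwa [Quad.measure_rot] at hq'
    have finish2 : (∃ q' : Quad G C2 C3 C0 C1, q'.measure < qb.rot.rot.measure) → False := by
      rintro ⟨q', hq'⟩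
      refine finish0 ⟨q'.rot.rot, ?_⟩
      rw [Quad.measure_rot, Quad.measure_rot]
      rwa [Quad.measure_rot, Quad.measure_rot] at hq'
    have finish3 : (∃ q' : Quad G C3 C0 C1 C2, q'.measure < qb.rot.rot.rot.measure) → False := by
      rintro ⟨q', hq'⟩
      refine finish0 ⟨q'.rot, ?_⟩
      rw [Quad.measure_rot]
      rwa [Quad.measure_rot, Quad.measure_rot, Quad.measure_rot] at hq'
    rcases hx4 with hx0 | hx1 | hx2 | hx3 <;> rcases hy4 with hy0 | hy1 | hy2 | hy3
    · exact finish0 (surgery_same qb hx0 hy0 hadj (fun h => hnot ((hWe _).mpr (Or.inl h))))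
    · refine finish0 (surgery_adj qb hx0 hy1 hadj ?_)
      rintro ⟨h1, h2⟩
      exact hnot (by rw [h1, h2]; exact hce0)
    · exact ne02 x y (hm0 _ hx0) (hm2 _ hy2) hadj
    · refine finish3 (surgery_adj qb.rot.rot.rot (x := y) (y := x) hy3 hx0 hadj.symm ?_)
      rintro ⟨h1, h2⟩
      exact hnot (by rw [h2, h1, Sym2.eq_swap]; exact hce3)
    · refine finish0 (surgery_adj qb (x := y) (y := x) hy0 hx1 hadj.symm ?_)
      rintro ⟨h1, h2⟩
      exact hnot (by rw [h2, h1, Sym2.eq_swap]; exact hce0)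
    · exact finish1 (surgery_same qb.rot hx1 hy1 hadj
        (fun h => hnot ((hWe _).mpr (Or.inr (Or.inl h)))))
    · refine finish1 (surgery_adj qb.rot hx1 hy2 hadj ?_)
      rintro ⟨h1, h2⟩
      exact hnot (by rw [h1, h2]; exact hce1)
    · exact ne13 x y (hm1 _ hx1) (hm3 _ hy3) hadj
    · exact ne02 y x (hm0 _ hy0) (hm2 _ hx2) hadj.symm
    · refine finish1 (surgery_adj qb.rot (x := y) (y := x) hy1 hx2 hadj.symm ?_)
      rintro ⟨h1, h2⟩
      exact hnot (by rw [h2, h1, Sym2.eq_swap]; exact hce1)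
    · exact finish2 (surgery_same qb.rot.rot hx2 hy2 hadj
        (fun h => hnot ((hWe _).mpr (Or.inr (Or.inr (Or.inl h))))))
    · refine finish2 (surgery_adj qb.rot.rot hx2 hy3 hadj ?_)
      rintro ⟨h1, h2⟩
      exact hnot (by rw [h1, h2]; exact hce2)
    · refine finish3 (surgery_adj qb.rot.rot.rot hx3 hy0 hadj ?_)
      rintro ⟨h1, h2⟩
      exact hnot (by rw [h1, h2]; exact hce3)
    · exact ne13 y x (hm1 _ hy1) (hm3 _ hx3) hadj.symm
    · refine finish2 (surgery_adj qb.rot.rot (x := y) (y := x) hy2 hx3 hadj.symm ?_)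
      rintro ⟨h1, h2⟩
      exact hnot (by rw [h2, h1, Sym2.eq_swap]; exact hce2)
    · exact finish3 (surgery_same qb.rot.rot.rot hx3 hy3 hadj
        (fun h => hnot ((hWe _).mpr (Or.inr (Or.inr (Or.inr (Or.inl h)))))))
  have hWlen : 4 ≤ Wk.length := by
    rw [hWdef, Walk.length_cons, hRdef]
    simp only [Walk.length_append, Walk.length_cons]
    omega
  exact chordal_no_chordless_cycle hch Wk hcyc hchord hWlen

lemma bag_walk {V κ : Type} {G : SimpleGraph V} {g : V → κ}
    (hconn : ∀ j, (G.induce (g ⁻¹' {j})).Connected) (u v : V) (h : g u = g v) :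
    ∃ P : G.Walk u v, ∀ z ∈ P.support, g z = g u := by
  have hu : u ∈ g ⁻¹' {g u} := rfl
  have hv : v ∈ g ⁻¹' {g u} := h.symm
  obtain ⟨pw⟩ := (hconn (g u)).preconnected ⟨u, hu⟩ ⟨v, hv⟩
  refine ⟨pw.map (SimpleGraph.Embedding.induce (g ⁻¹' {g u})).toHom, ?_⟩
  intro z hz
  replace hz : z ∈ pw.support.map (SimpleGraph.Embedding.induce (G := G) (g ⁻¹' {g u})).toHom := by
    rw [← Walk.support_map]; exact hz
  obtain ⟨⟨z', hz'⟩, _, rfl⟩ := List.mem_map.mp hz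
  exact hz'

lemma lift_walk {V ι κ : Type} {G : SimpleGraph V} {g : V → κ}
    (hconn : ∀ j, (G.induce (g ⁻¹' {j})).Connected) :
    ∀ {j j' : κ} (Wq : (quotientGraph G g).Walk j j') (S : Set κ),
      (∀ x ∈ Wq.support, x ∈ S) → ∀ u v : V, g u = j → g v = j' →
      ∃ P : G.Walk u v, ∀ z ∈ P.support, g z ∈ S := by
  intro j j' Wq
  induction Wq with
  | nil =>
    intro S hS u v hu hv
    obtain ⟨P, hP⟩ := bag_walk hconn u v (hu.trans hv.symm)
    refine ⟨P, fun z hz => ?_⟩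
    rw [hP z hz, hu]
    exact hS _ (Walk.start_mem_support _)
  | @cons j j1 j2 hadj W' ih =>
    intro S hS u v hu hv
    have hj : j ∈ S := hS _ (Walk.start_mem_support _)
    have hS' : ∀ x ∈ W'.support, x ∈ S := fun x hx =>
      hS x (by rw [Walk.support_cons]; exact List.mem_cons.mpr (Or.inr hx))
    have hj1 : j1 ∈ S := hS' j1 (Walk.start_mem_support W')
    obtain ⟨hne, a, b, hab, hga, hgb⟩ := hadj
    obtain ⟨P1, hP1⟩ := bag_walk hconn u a (hu.trans hga.symm)
    obtain ⟨P2, hP2⟩ := ih S hS' b v hgb hv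
    refine ⟨P1.append (Walk.cons hab P2), ?_⟩
    intro z hz
    rw [Walk.mem_support_append_iff] at hz
    rcases hz with hz | hz
    · rw [hP1 z hz, hu]
      exact hj
    · rw [Walk.support_cons] at hz
      rcases List.mem_cons.mp hz with rfl | hz
      · rw [hga]
        exact hj
      · exact hP2 z hz

lemma getVert_map {V W : Type*} {G : SimpleGraph V} {G' : SimpleGraph W} (h : G →g G')
    {u v : V} (p : G.Walk u v) (k : ℕ) : (p.map h).getVert k = h (p.getVert k) := by
  induction p generalizing k with
  | nil => simp [Walk.getVert]
  | cons hadj q ih =>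
    cases k with
    | zero => simp
    | succ k =>
      rw [Walk.map_cons, Walk.getVert_cons_succ, Walk.getVert_cons_succ]
      exact ih k

end TPW

/-- Splitting each bag of a tree-partition of a chordal graph into the connected
components of its induced subgraph again yields a partition whose quotient is a forest. -/
theorem stmt6 {V ι κ : Type} (G : SimpleGraph V) (hc : IsChordal G)
    (f : V → ι) (hf : IsTreePartition G f) (g : V → κ)
    (hrefine : ∀ u v, g u = g v → f u = f v)
    (hconn : ∀ j, (G.induce (g ⁻¹' {j})).Connected)
    (hmax : ∀ u v (h : f u = f v),
      (G.induce (f ⁻¹' {f u})).Reachable ⟨u, rfl⟩ ⟨v, h.symm⟩ → g u = g v) :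
    (quotientGraph G g).IsAcyclic := by
  classical
  open TPW in
  by_contra hcyc
  set H := quotientGraph G g with hHdef
  set F := quotientGraph G f with hFdef
  obtain ⟨j0, c, hcy, hchordless⟩ := TPW.exists_chordless_cycle hcyc
  have hn3 : 3 ≤ c.length := hcy.three_le_length
  set n := c.length with hndef
  -- same f-bag adjacent vertices are in the same g-bag
  have hsame : ∀ u v : V, G.Adj u v → f u = f v → g u = g v := by
    intro u v huv hfu
    apply hmax u v hfu
    exact SimpleGraph.Adj.reachable (by simpa using huv)
  -- basepoint for φ
  have hadj01 : H.Adj (c.getVert 0) (c.getVert 1) := c.adj_getVert_succ (by omega)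
  obtain ⟨-, u0, v0, -, -, -⟩ := id hadj01
  set φ : κ → ι := fun j => if h : ∃ u : V, g u = j then f h.choose else f u0 with hφdef
  have hφ : ∀ u : V, φ (g u) = f u := by
    intro u
    have h : ∃ w : V, g w = g u := ⟨u, rfl⟩
    simp only [hφdef, dif_pos h]
    exact hrefine _ _ h.choose_spec
  have hNoAdj : ∀ j j', φ j = φ j' → ¬ H.Adj j j' := by
    intro j j' hjj' hadj
    obtain ⟨hne, u, v, huv, hgu, hgv⟩ := hadj
    have hfuv : f u = f v := by
      rw [← hφ u, ← hφ v, hgu, hgv, hjj']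
    exact hne (by rw [← hgu, ← hgv, hsame u v huv hfuv])
  have hHom : ∀ {j j'}, H.Adj j j' → F.Adj (φ j) (φ j') := by
    intro j j' hadj
    have hadj' := hadj
    obtain ⟨hne, u, v, huv, hgu, hgv⟩ := hadj
    refine ⟨fun hEq => hNoAdj j j' hEq hadj', u, v, huv, ?_, ?_⟩
    · rw [← hgu, hφ u]
    · rw [← hgv, hφ v]
  set φH : H →g F := ⟨φ, fun h => hHom h⟩ with hφHdef
  -- project and find a spur
  have hfa : F.IsAcyclic := hf.2
  obtain ⟨k, hk0, hkn, hspur⟩ := TPW.exists_spur hfa (c.map φH)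
    (by rw [Walk.length_map]; omega)
  rw [Walk.length_map] at hkn
  rw [TPW.getVert_map, TPW.getVert_map] at hspur
  -- hspur : φ (c.getVert (k-1)) = φ (c.getVert (k+1))
  set B0 := c.getVert (k - 1) with hB0def
  set A := c.getVert k with hAdef
  set B2 := c.getVert (k + 1) with hB2def
  have hadj0A : H.Adj B0 A := by
    have := c.adj_getVert_succ (i := k - 1) (by omega)
    rwa [show k - 1 + 1 = k by omega] at this
  have hadjAB2 : H.Adj A B2 := c.adj_getVert_succ (by omega)
  have hB0B2 : B0 ≠ B2 := by
    intro hEq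
    rcases TPW.cycle_getVert_inj hcy (by omega) (by omega) hEq with h | ⟨h1, h2⟩ | ⟨h1, h2⟩ <;>
      omega
  have hnadj02 : ¬H.Adj B0 B2 := hNoAdj _ _ hspur
  have hmemc : ∀ t, t ≤ n → c.getVert t ∈ c.support := by
    intro t ht
    rw [TPW.support_eq_map_range]
    exact List.mem_map.mpr ⟨t, List.mem_range.mpr (by omega), rfl⟩
  have hB0s : B0 ∈ c.support := hmemc (k - 1) (by omega)
  have hAs : A ∈ c.support := hmemc k (by omega)
  have hB2s : B2 ∈ c.support := hmemc (k + 1) (by omega)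
  -- rotate at A and peel
  set c2 := c.rotate A hAs with hc2def
  have hc2cyc : c2.IsCycle := hcy.rotate hAs
  have hc2len : c2.length = n := TPW.length_rotate c hAs
  obtain ⟨x1, y1, Pq, hAx1, hy1A, hx1v, hy1v, hPsup⟩ := TPW.peel c2 (by omega)
  have hAnotP : A ∉ Pq.support := by
    intro hmem
    rw [hPsup, TPW.support_tail_dropLast_eq_map] at hmem
    obtain ⟨i, hi, hieq⟩ := List.mem_map.mp hmem
    have hir : i < c2.length - 1 := List.mem_range.mp hi
    have hEq : c2.getVert (i + 1) = c2.getVert 0 := by rw [hieq, Walk.getVert_zero]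
    rcases TPW.cycle_getVert_inj hc2cyc (by omega) (by omega) hEq with h | ⟨h1, h2⟩ | ⟨h1, h2⟩ <;>
      omega
  have hPsub : ∀ j ∈ Pq.support, j ∈ c.support := by
    intro j hj
    have hj2 : j ∈ c2.support := by
      rw [hPsup] at hj
      exact List.mem_of_mem_tail (List.dropLast_subset _ hj)
    exact TPW.mem_support_of_rotate c hAs (by rw [← hc2def, hc2len]; omega) hj2
  have hx1y1 : x1 ≠ y1 := by
    intro hEq
    rw [hx1v, hy1v] at hEq
    rcases TPW.cycle_getVert_inj hc2cyc (by omega) (by omega) hEq with h | ⟨h1, h2⟩ | ⟨h1, h2⟩ <;>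
      omega
  have hx1c : x1 ∈ c.support := hPsub x1 (Walk.start_mem_support _)
  have hy1c : y1 ∈ c.support := hPsub y1 (Walk.end_mem_support _)
  have hx1A : x1 ≠ A := fun h => hAnotP (h ▸ Walk.start_mem_support Pq)
  have hy1Ane : y1 ≠ A := fun h => hAnotP (h ▸ Walk.end_mem_support Pq)
  -- edges at A
  have hEx1 : s(A, x1) ∈ c.edges := hchordless A x1 hAs hx1c hAx1
  have hEy1 : s(A, y1) ∈ c.edges := hchordless A y1 hAs hy1c hy1A.symm
  have hEB0 : s(A, B0) ∈ c.edges := hchordless A B0 hAs hB0s hadj0A.symm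
  have hEB2 : s(A, B2) ∈ c.edges := hchordless A B2 hAs hB2s hadjAB2
  have hB0in : B0 = x1 ∨ B0 = y1 := by
    by_contra hcon
    push_neg at hcon
    exact TPW.cycle_at_most_two_partners hcy hEx1 hEy1 hEB0 hx1y1
      (fun h => hcon.1 h.symm) (fun h => hcon.2 h.symm)
  have hB2in : B2 = x1 ∨ B2 = y1 := by
    by_contra hcon
    push_neg at hcon
    exact TPW.cycle_at_most_two_partners hcy hEx1 hEy1 hEB2 hx1y1
      (fun h => hcon.1 h.symm) (fun h => hcon.2 h.symm)
  -- get the walk from B2 to B0 avoiding A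
  obtain ⟨ZH, hZsup⟩ : ∃ ZH : H.Walk B2 B0, ∀ j ∈ ZH.support, j ∈ c.support ∧ j ≠ A := by
    rcases hB0in with h0 | h0
    · have h2 : B2 = y1 := by
        rcases hB2in with h2 | h2
        · exact absurd (h0.trans h2.symm) hB0B2
        · exact h2
      refine ⟨Pq.reverse.copy h2.symm h0.symm, ?_⟩
      intro j hj
      rw [Walk.support_copy, Walk.support_reverse, List.mem_reverse] at hj
      exact ⟨hPsub j hj, fun h => hAnotP (h ▸ hj)⟩
    · have h2 : B2 = x1 := by
        rcases hB2in with h2 | h2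
        · exact h2
        · exact absurd (h2.trans h0.symm).symm hB0B2
      refine ⟨Pq.copy h2.symm h0.symm, ?_⟩
      intro j hj
      rw [Walk.support_copy] at hj
      exact ⟨hPsub j hj, fun h => hAnotP (h ▸ hj)⟩
  -- witnesses for the connecting edges
  obtain ⟨-, w0, a0w, hab0, hgw0, hga0⟩ := id hadj0A
  obtain ⟨-, a1w, w2, hab1, hga1, hgw2⟩ := id hadjAB2
  -- lift ZH to G and take a minimal connecting walk
  obtain ⟨W0, hW0⟩ := TPW.lift_walk (ι := ι) hconn ZH {j | j ∈ ZH.support}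
    (fun x hx => hx) w2 w0 hgw2 hgw0
  set T := {L | ∃ (wa wb : V) (Wg : G.Walk wa wb), g wa = B2 ∧ g wb = B0 ∧
    (∀ z ∈ Wg.support, g z ∈ ZH.support) ∧ Wg.length = L} with hTdef
  have hT : T.Nonempty := ⟨W0.length, w2, w0, W0, hgw2, hgw0, hW0, rfl⟩
  obtain ⟨wa, wb, Wg, hgwa, hgwb, hWgs, hWglen⟩ := Nat.sInf_mem hT
  have hWg2 : 2 ≤ Wg.length := by
    rcases Nat.lt_or_ge Wg.length 2 with hlt | hge
    · exfalso
      rcases (by omega : Wg.length = 0 ∨ Wg.length = 1) with h0 | h1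
      · have := TPW.eq_of_length_zero h0
        subst this
        exact hB0B2 (hgwa.symm.trans hgwb).symm
      · have hadj : G.Adj wa wb := Walk.adj_of_mem_edges Wg (TPW.mem_edges_of_length_one h1)
        exact hnadj02 (H.adj_symm ⟨hB0B2.symm, wa, wb, hadj, hgwa, hgwb⟩)
    · exact hge
  obtain ⟨x3, y3, P3, hax3, hy3b, hx3v, hy3v, hP3sup⟩ := TPW.peel Wg hWg2
  have hint : ∀ z ∈ P3.support, g z ∈ ZH.support ∧ g z ≠ B0 ∧ g z ≠ B2 := by
    intro z hz
    have hzW : z ∈ Wg.support := by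
      rw [hP3sup] at hz
      exact List.mem_of_mem_tail (List.dropLast_subset _ hz)
    have hzidx := hz
    rw [hP3sup, TPW.support_tail_dropLast_eq_map] at hzidx
    obtain ⟨i, hi, hieq⟩ := List.mem_map.mp hzidx
    have hir : i < Wg.length - 1 := List.mem_range.mp hi
    refine ⟨hWgs z hzW, ?_, ?_⟩
    · -- g z ≠ B0 : otherwise prefix walk is shorter
      intro hzB0
      have hrevv : (Wg.reverse.drop (Wg.length - (i + 1))).reverse.length = i + 1 := by
        rw [Walk.length_reverse, TPW.length_drop, Walk.length_reverse]
        omega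
      have hend : Wg.reverse.getVert (Wg.length - (i + 1)) = z := by
        rw [Walk.getVert_reverse, show Wg.length - (Wg.length - (i + 1)) = i + 1 by omega, hieq]
      have hmemT : i + 1 ∈ T := by
        refine ⟨wa, z, (Wg.reverse.drop (Wg.length - (i + 1))).reverse.copy rfl hend,
          hgwa, hzB0, ?_, by rw [Walk.length_copy]; exact hrevv⟩
        intro w hw
        rw [Walk.support_copy, Walk.support_reverse, List.mem_reverse] at hw
        have := TPW.support_drop_subset Wg.reverse _ hw
        rw [Walk.support_reverse, List.mem_reverse] at this
        exact hWgs w this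
      have := Nat.sInf_le hmemT
      omega
    · -- g z ≠ B2 : otherwise suffix walk is shorter
      intro hzB2
      have hmemT : Wg.length - (i + 1) ∈ T := by
        refine ⟨z, wb, (Wg.drop (i + 1)).copy (by rw [hieq]) rfl, ?_, hgwb, ?_,
          by rw [Walk.length_copy]; exact TPW.length_drop Wg (i + 1)⟩
        · exact hzB2
        · intro w hw
          rw [Walk.support_copy] at hw
          exact hWgs w (TPW.support_drop_subset Wg _ hw)
      have := Nat.sInf_le hmemT
      omega
  -- bag walks for the quad
  obtain ⟨P0, hP0⟩ := TPW.bag_walk hconn wb w0 (hgwb.trans hgw0.symm)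
  obtain ⟨P1, hP1⟩ := TPW.bag_walk hconn a0w a1w (hga0.trans hga1.symm)
  obtain ⟨P2, hP2⟩ := TPW.bag_walk hconn w2 wa (hgw2.trans hgwa.symm)
  -- assemble the quad over the four classes
  refine TPW.quad_false hc
    (C0 := g ⁻¹' {B0}) (C1 := g ⁻¹' {A}) (C2 := g ⁻¹' {B2})
    (C3 := {z | g z ∈ ZH.support ∧ g z ≠ B0 ∧ g z ≠ B2})
    ?_ ?_ ?_ ?_ ?_ ?_ ?_ ?_
    ⟨wb, w0, a0w, a1w, w2, wa, x3, y3, P0, P1, P2, P3,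
      ?_, ?_, ?_, hint, hab0, hab1, hax3, hy3b⟩
  · -- d01
    intro x hx0 hx1
    exact hadj0A.ne (hx0.symm.trans hx1)
  · -- d02
    intro x hx0 hx2
    exact hB0B2 (hx0.symm.trans hx2)
  · -- d03
    intro x hx0 hx3
    exact hx3.2.1 hx0
  · -- d12
    intro x hx1 hx2
    exact hadjAB2.ne (hx1.symm.trans hx2)
  · -- d13
    intro x hx1 hx3
    exact (hZsup _ hx3.1).2 hx1
  · -- d23
    intro x hx2 hx3
    exact hx3.2.2 hx2
  · -- ne02
    intro x y hx0 hy2 hadj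
    exact hnadj02 ⟨hB0B2, x, y, hadj, hx0, hy2⟩
  · -- ne13
    intro x y hx1 hy3 hadj
    have hjc : g y ∈ c.support := (hZsup _ hy3.1).1
    have hjA : g y ≠ A := (hZsup _ hy3.1).2
    have hHadj : H.Adj A (g y) := ⟨fun h => hjA h.symm, x, y, hadj, hx1, rfl⟩
    have hEj : s(A, g y) ∈ c.edges := hchordless A (g y) hAs hjc hHadj
    exact TPW.cycle_at_most_two_partners hcy hEB0 hEB2 hEj hB0B2
      (fun h => hy3.2.1 h.symm) (fun h => hy3.2.2 h.symm)
  · -- P0 in C0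
    intro z hz
    have := hP0 z hz
    show g z = B0
    rw [this]
    exact hgwb
  · -- P1 in C1
    intro z hz
    have := hP1 z hz
    show g z = A
    rw [this]
    exact hga0
  · -- P2 in C2
    intro z hz
    have := hP2 z hz
    show g z = B2
    rw [this]
    exact hgw2
end

section
/- Let n ≥ 2 and k ≥ 1, and let H be the graph on vertex set [n] × [k] where distinct vertices (x₁,y₁) and (x₂,y₂) are adjacent iff |x₁ − x₂| ≤ 1. Then H is chordal. -/
open SimpleGraph

/-- The grid-like graph on `[n] × [k]` where distinct vertices are adjacent
iff their first coordinates differ by at most one. -/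
def gridGraph (n k : ℕ) : SimpleGraph (Fin n × Fin k) where
  Adj a b := a ≠ b ∧ ((a.1.val : ℤ) - (b.1.val : ℤ)).natAbs ≤ 1
  symm := by
    constructor
    rintro a b ⟨h1, h2⟩
    refine ⟨h1.symm, ?_⟩
    rwa [← neg_sub, Int.natAbs_neg] at h2
  loopless := by constructor; rintro a ⟨h, -⟩; exact h rfl

/-- The graph on `[n] × [k]` with adjacency `|x₁ - x₂| ≤ 1` is chordal. -/
theorem stmt10 (n k : ℕ) (hn : 2 ≤ n) (hk : 1 ≤ k) :
    IsChordal (gridGraph n k) := by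
  intro m hm
  obtain ⟨m, rfl⟩ := Nat.exists_eq_add_of_le' hm
  constructor
  intro f
  obtain ⟨i, hi⟩ := Finite.exists_max (fun i : Fin (m + 4) => ((f i).1 : ℕ))
  have hcadj : ∀ u v : Fin (m + 4),
      (cycleGraph (m + 4)).Adj u v ↔ u - v = 1 ∨ v - u = 1 :=
    fun u v => cycleGraph_adj (n := m + 2)
  have hval1 : ((1 : Fin (m + 4)) : ℕ) = 1 := by
    rw [Fin.val_one']; exact Nat.mod_eq_of_lt (by omega)
  have hval2 : ((2 : Fin (m + 4)) : ℕ) = 2 := by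
    show 2 % (m + 4) = 2; exact Nat.mod_eq_of_lt (by omega)
  have hval3 : ((3 : Fin (m + 4)) : ℕ) = 3 := by
    show 3 % (m + 4) = 3; exact Nat.mod_eq_of_lt (by omega)
  have hadj1 : (cycleGraph (m + 4)).Adj i (i + 1) :=
    (hcadj _ _).mpr (Or.inr (by rw [add_sub_cancel_left]))
  have hadj2 : (cycleGraph (m + 4)).Adj i (i - 1) :=
    (hcadj _ _).mpr (Or.inl (by rw [sub_sub_cancel]))
  have hne : i - 1 ≠ i + 1 := by
    intro h
    have h2 : (2 : Fin (m + 4)) = 0 := by open Fin.CommRing in linear_combination -h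
    have := congrArg Fin.val h2
    rw [hval2] at this
    simp at this
  have hnadj : ¬ (cycleGraph (m + 4)).Adj (i - 1) (i + 1) := by
    rw [hcadj]
    rintro (h | h)
    · have h3 : (3 : Fin (m + 4)) = 0 := by open Fin.CommRing in linear_combination -h
      have := congrArg Fin.val h3
      rw [hval3] at this
      simp at this
    · have h1 : (1 : Fin (m + 4)) = 0 := by open Fin.CommRing in linear_combination h
      have := congrArg Fin.val h1
      rw [hval1] at this
      simp at this
  obtain ⟨-, b1⟩ := f.map_adj_iff.mpr hadj1
  obtain ⟨-, b2⟩ := f.map_adj_iff.mpr hadj2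
  have m1 := hi (i + 1)
  have m2 := hi (i - 1)
  have : (gridGraph n k).Adj (f (i - 1)) (f (i + 1)) := by
    refine ⟨fun h => hne (f.injective h), ?_⟩
    omega
  exact hnadj (f.map_adj_iff.mp this)
end

section
/- Every tree that is an interval graph is a caterpillar. -/
open SimpleGraph

/-- A path graph: connected, acyclic, and every vertex has at most two neighbours. -/
def IsPathGraph {W : Type} (H : SimpleGraph W) : Prop :=
  H.Connected ∧ H.IsAcyclic ∧
    ∀ v a b c, H.Adj v a → H.Adj v b → H.Adj v c → a = b ∨ a = c ∨ b = c

/-- The vertices of degree at least two (the non-leaves). -/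
def internalVerts {V : Type} (G : SimpleGraph V) : Set V :=
  {v | ∃ a b, a ≠ b ∧ G.Adj v a ∧ G.Adj v b}

/-- A caterpillar: a tree in which deleting all leaves yields a path (or the empty graph). -/
def IsCaterpillar {V : Type} (G : SimpleGraph V) : Prop :=
  G.Connected ∧ G.IsAcyclic ∧
    (internalVerts G = ∅ ∨ IsPathGraph (G.induce (internalVerts G)))

/-- A graph is an interval graph if adjacency is intersection of assigned closed
real intervals. -/
def IsIntervalGraph {V : Type} (G : SimpleGraph V) : Prop :=
  ∃ a b : V → ℝ, ∀ u v, G.Adj u v ↔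
    u ≠ v ∧ (Set.Icc (a u) (b u) ∩ Set.Icc (a v) (b v)).Nonempty


lemma noTri {V : Type} {T : SimpleGraph V} (hacyc : T.IsAcyclic)
    {x y z : V} (hxy : T.Adj x y) (hyz : T.Adj y z) (hzx : T.Adj z x) : False := by
  rw [isAcyclic_iff_path_unique] at hacyc
  have hp1 : (Walk.cons hxy (Walk.cons hyz Walk.nil) : T.Walk x z).IsPath := by
    simp [Walk.isPath_def, hxy.ne, hyz.ne, hzx.ne']
  have h := hacyc ⟨_, hp1⟩ (Path.singleton hzx.symm)
  have := congrArg (fun p : T.Path x z => (p : T.Walk x z).length) h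
  simp [Path.singleton] at this

lemma midLemma {V : Type} {T : SimpleGraph V} (hacyc : T.IsAcyclic)
    {L R : V → ℝ}
    (hrep : ∀ u w, T.Adj u w ↔ u ≠ w ∧
      (Set.Icc (L u) (R u) ∩ Set.Icc (L w) (R w)).Nonempty)
    {v l m r : V} (hvm : T.Adj v m) (hmi : m ∈ internalVerts T)
    (hlm : ¬ T.Adj l m) (hlmne : l ≠ m) (hrm : ¬ T.Adj r m) (hrmne : r ≠ m)
    {xl xm xr : ℝ}
    (hxl : xl ∈ Set.Icc (L v) (R v) ∩ Set.Icc (L l) (R l))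
    (hxm : xm ∈ Set.Icc (L v) (R v) ∩ Set.Icc (L m) (R m))
    (hxr : xr ∈ Set.Icc (L v) (R v) ∩ Set.Icc (L r) (R r))
    (h1 : xl ≤ xm) (h2 : xm ≤ xr) : False := by
  classical
  obtain ⟨p, q, hpq, hp, hq⟩ := hmi
  have hm' : ∃ m', m' ≠ v ∧ T.Adj m m' := by
    by_cases hpv : p = v
    · subst hpv; exact ⟨q, Ne.symm hpq, hq⟩
    · exact ⟨p, hpv, hp⟩
  obtain ⟨m', hm'v, hmm'⟩ := hm'
  have hm'nv : ¬ T.Adj m' v := fun h => noTri hacyc hvm hmm' h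
  have hdisj : ∀ y, y ∈ Set.Icc (L m') (R m') → y ∉ Set.Icc (L v) (R v) := by
    intro y hy hyv
    exact hm'nv ((hrep m' v).mpr ⟨hm'v, ⟨y, hy, hyv⟩⟩)
  obtain ⟨y, hym, hym'⟩ := ((hrep m m').mp hmm').2
  have hynv := hdisj y hym'
  rw [Set.mem_Icc, not_and_or, not_le, not_le] at hynv
  have hIlm : ∀ x, x ∈ Set.Icc (L l) (R l) → x ∉ Set.Icc (L m) (R m) := by
    intro x hx hxm
    exact hlm ((hrep l m).mpr ⟨hlmne, ⟨x, hx, hxm⟩⟩)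
  have hIrm : ∀ x, x ∈ Set.Icc (L r) (R r) → x ∉ Set.Icc (L m) (R m) := by
    intro x hx hxm
    exact hrm ((hrep r m).mpr ⟨hrmne, ⟨x, hx, hxm⟩⟩)
  rcases hynv with hy1 | hy2
  · exact hIlm xl hxl.2 ⟨le_trans hym.1 (le_trans hy1.le hxl.1.1), le_trans h1 hxm.2.2⟩
  · exact hIrm xr hxr.2 ⟨le_trans hxm.2.1 h2, le_trans (le_trans hxr.1.2 hy2.le) hym.2⟩

lemma reachAux {V : Type} {T : SimpleGraph V} {u v : V} (p : T.Walk u v) (hp : p.IsPath)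
    (hu : u ∈ internalVerts T) (hv : v ∈ internalVerts T) :
    (T.induce (internalVerts T)).Reachable ⟨u, hu⟩ ⟨v, hv⟩ := by
  induction p with
  | nil => exact Reachable.refl _
  | @cons u w v h q ih =>
    cases q with
    | nil => exact Adj.reachable (by exact h)
    | @cons w x v h' q' =>
      rw [Walk.cons_isPath_iff] at hp
      have hux : u ≠ x := by
        rintro rfl
        exact hp.2 (by simp [Walk.support_cons, Walk.start_mem_support])
      have hw : w ∈ internalVerts T := ⟨u, x, hux, h.symm, h'⟩
      exact Reachable.trans (Adj.reachable (by exact h)) (ih hp.1 hw hv)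

/-- Every tree that is an interval graph is a caterpillar. -/
theorem stmt12 {V : Type} (T : SimpleGraph V)
    (hconn : T.Connected) (hacyc : T.IsAcyclic)
    (hint : IsIntervalGraph T) : IsCaterpillar T := by
  unfold IsCaterpillar IsPathGraph
  classical
  refine ⟨hconn, hacyc, ?_⟩
  by_cases hne : internalVerts T = ∅
  · exact Or.inl hne
  right
  have hne' : (internalVerts T).Nonempty := Set.nonempty_iff_ne_empty.mpr hne
  refine ⟨?_, ?_, ?_⟩
  · have : Nonempty (internalVerts T) := hne'.to_subtype
    refine ⟨fun u v => ?_⟩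
    obtain ⟨p⟩ := hconn.preconnected u.1 v.1
    obtain ⟨q, hq⟩ := p.toPath
    have := reachAux q hq u.2 v.2
    simpa using this
  · intro w p hp
    have := hp.map (f := (Embedding.induce (internalVerts T) (G := T)).toHom)
      (Embedding.induce (internalVerts T) (G := T)).injective
    exact hacyc _ this
  · rintro ⟨v, hv⟩ ⟨a, ha⟩ ⟨b, hb⟩ ⟨c, hc⟩ hva hvb hvc
    by_contra hcon
    push_neg at hcon
    obtain ⟨hab, hac, hbc⟩ := hcon
    have hab' : a ≠ b := fun h => hab (Subtype.ext h)
    have hac' : a ≠ c := fun h => hac (Subtype.ext h)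
    have hbc' : b ≠ c := fun h => hbc (Subtype.ext h)
    have hva' : T.Adj v a := hva
    have hvb' : T.Adj v b := hvb
    have hvc' : T.Adj v c := hvc
    have hnab : ¬ T.Adj a b := fun h => noTri hacyc hva' h hvb'.symm
    have hnac : ¬ T.Adj a c := fun h => noTri hacyc hva' h hvc'.symm
    have hnbc : ¬ T.Adj b c := fun h => noTri hacyc hvb' h hvc'.symm
    obtain ⟨L, R, hrep⟩ := hint
    obtain ⟨xa, hxa⟩ := ((hrep v a).mp hva').2
    obtain ⟨xb, hxb⟩ := ((hrep v b).mp hvb').2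
    obtain ⟨xc, hxc⟩ := ((hrep v c).mp hvc').2
    rcases le_total xa xb with h1 | h1 <;> rcases le_total xb xc with h2 | h2 <;>
      rcases le_total xa xc with h3 | h3
    · exact midLemma hacyc hrep hvb' hb hnab hab' (fun h => hnbc h.symm) hbc'.symm hxa hxb hxc h1 h2
    · exact midLemma hacyc hrep hvb' hb hnab hab' (fun h => hnbc h.symm) hbc'.symm hxa hxb hxc h1 h2
    · exact midLemma hacyc hrep hvc' hc hnac hac' hnbc hbc' hxa hxc hxb h3 h2
    · exact midLemma hacyc hrep hva' ha (fun h => hnac h.symm) hac'.symm (fun h => hnab h.symm) hab'.symm hxc hxa hxb h3 h1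
    · exact midLemma hacyc hrep hva' ha (fun h => hnab h.symm) hab'.symm (fun h => hnac h.symm) hac'.symm hxb hxa hxc h1 h3
    · exact midLemma hacyc hrep hvc' hc hnbc hbc' hnac hac' hxb hxc hxa h2 h3
    · exact midLemma hacyc hrep hvb' hb (fun h => hnbc h.symm) hbc'.symm hnab hab' hxc hxb hxa h2 h1
    · exact midLemma hacyc hrep hvb' hb (fun h => hnbc h.symm) hbc'.symm hnab hab' hxc hxb hxa h2 h1
end

section
/- Let G be a chordal graph, S an independent set of simplicial vertices in G, and B ⊆ V(G) a set such that G[B] is connected and B ⊄ S. Then G[B − S] is connected. -/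
open SimpleGraph

private lemma stmt16_aux {V : Type} (G : SimpleGraph V)
    (S : Set V) (hind : _root_.IsIndepSet G S) (hsimp : ∀ v ∈ S, IsSimplicial G v)
    (B : Set V) :
    ∀ (n : ℕ) (u v : ↥B) (p : (G.induce B).Walk u v), p.length ≤ n →
      ∀ (hu : (u : V) ∉ S) (hv : (v : V) ∉ S),
      (G.induce (B \ S)).Reachable ⟨u, u.2, hu⟩ ⟨v, v.2, hv⟩ := by
  intro n
  induction n with
  | zero =>
    intro u v p hn hu hv
    have : u = v := p.eq_of_length_eq_zero (Nat.le_zero.mp hn)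
    subst this
    exact Reachable.refl _
  | succ n ih =>
    intro u v p hn hu hv
    cases p with
    | nil => exact Reachable.refl _
    | @cons _ w _ h q =>
      by_cases hwS : (w : V) ∈ S
      · cases q with
        | nil => exact absurd hwS hv
        | @cons _ x _ h' q' =>
          have hGwx : G.Adj (w : V) (x : V) := h'
          have hxS : (x : V) ∉ S := fun hx => hind _ hwS _ hx hGwx
          have hlen : q'.length ≤ n := by
            simp only [Walk.length_cons] at hn; omega
          have hrec := ih x v q' hlen hxS hv
          by_cases hux : (u : V) = (x : V)
          · have : u = x := Subtype.ext hux
            subst this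
            exact hrec
          · have hGuw : G.Adj (u : V) (w : V) := h
            have hadj : G.Adj (u : V) (x : V) :=
              (hsimp _ hwS) hGuw.symm hGwx hux
            have hstep : (G.induce (B \ S)).Adj ⟨u, u.2, hu⟩ ⟨x, x.2, hxS⟩ := hadj
            exact hstep.reachable.trans hrec
      · have hGuw : G.Adj (u : V) (w : V) := h
        have hstep : (G.induce (B \ S)).Adj ⟨u, u.2, hu⟩ ⟨w, w.2, hwS⟩ := hGuw
        have hlen : q.length ≤ n := by
          simp only [Walk.length_cons] at hn; omega
        exact hstep.reachable.trans (ih w v q hlen hwS hv)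

/-- In a chordal graph, removing an independent set of simplicial vertices from a
connected induced subgraph that is not contained in it leaves a connected subgraph. -/
theorem stmt16 {V : Type} (G : SimpleGraph V) (hc : IsChordal G)
    (S : Set V) (hind : _root_.IsIndepSet G S) (hsimp : ∀ v ∈ S, IsSimplicial G v)
    (B : Set V) (hconn : (G.induce B).Connected) (hns : ¬ B ⊆ S) :
    (G.induce (B \ S)).Connected := by
  obtain ⟨b, hbB, hbS⟩ := Set.not_subset.mp hns
  rw [connected_iff]
  constructor
  · rintro ⟨x, hxB, hxS⟩ ⟨y, hyB, hyS⟩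
    obtain ⟨p⟩ := hconn.preconnected ⟨x, hxB⟩ ⟨y, hyB⟩
    exact stmt16_aux G S hind hsimp B p.length ⟨x, hxB⟩ ⟨y, hyB⟩ p le_rfl hxS hyS
  · exact ⟨⟨b, hbB, hbS⟩⟩
end

section
/- Let G be a graph with a tree-partition whose quotient is a tree U, such that each bag induces a connected subgraph, and suppose G is the graph on [n] × [k] (n ≥ 2) with (x₁,y₁) ~ (x₂,y₂) iff |x₁−x₂| ≤ 1. For each bag B let I(B) be the closed interval [ℓ(B)−1/2, r(B)+1/2], where ℓ(B) and r(B) are the minimum and maximum first coordinates of vertices in B. Then two bags B, C are adjacent in U if and only if I(B) ∩ I(C) ≠ ∅, so U is an interval graph and hence a caterpillar. -/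
open SimpleGraph

lemma no_triangle {ι : Type} {Q : SimpleGraph ι} (hQ : Q.IsAcyclic) {a b c : ι}
    (hab : Q.Adj a b) (hbc : Q.Adj b c) (hac : Q.Adj a c) : False := by
  rw [isAcyclic_iff_path_unique] at hQ
  have h := hQ (⟨.cons hab .nil, by simp [hab.ne]⟩ : Q.Path a b)
    ⟨.cons hac (.cons hbc.symm .nil), by
      simp [Walk.isPath_def, hab.ne, hac.ne, hbc.ne']⟩
  have hlen := congrArg (fun p : Q.Path a b => p.1.length) h
  simp at hlen

lemma induce_acyclic {ι : Type} {Q : SimpleGraph ι} (hQ : Q.IsAcyclic) (S : Set ι) :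
    (Q.induce S).IsAcyclic := by
  intro v p hp
  have e : Q.induce S ↪g Q := Embedding.induce S
  exact hQ (p.map e.toHom) (hp.map e.injective)

lemma lift_walk {ι : Type} {Q : SimpleGraph ι} {S : Set ι} {u v : ι} (p : Q.Walk u v)
    (hs : ∀ x ∈ p.support, x ∈ S) (hu : u ∈ S) (hv : v ∈ S) :
    (Q.induce S).Reachable ⟨u, hu⟩ ⟨v, hv⟩ := by
  induction p with
  | nil => exact Reachable.refl _
  | @cons a w v h q ih =>
    have hw : w ∈ S := hs w (by simp)
    have h' : (Q.induce S).Adj ⟨a, hu⟩ ⟨w, hw⟩ := h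
    exact (h'.reachable).trans (ih (fun x hx => hs x (by simp [hx])) hw hv)

lemma path_internal {ι : Type} {Q : SimpleGraph ι} {u v : ι} (p : Q.Walk u v) (hp : p.IsPath)
    (hu : u ∈ internalVerts Q) (hv : v ∈ internalVerts Q) :
    ∀ x ∈ p.support, x ∈ internalVerts Q := by
  induction p with
  | nil => intro x hx; simp at hx; subst hx; exact hu
  | @cons a w v h q ih =>
    have hw : w ∈ internalVerts Q := by
      cases q with
      | nil => exact hv
      | @cons w w' v h' q' =>
        refine ⟨a, w', ?_, h.symm, h'⟩
        intro heq; subst heq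
        have hnd := hp.support_nodup
        rw [Walk.support_cons, Walk.support_cons, List.nodup_cons] at hnd
        exact hnd.1 (List.mem_cons_of_mem _ (Walk.start_mem_support q'))
    intro x hx
    rw [Walk.support_cons, List.mem_cons] at hx
    rcases hx with rfl | hx
    · exact hu
    · exact ih hp.of_cons hw hv x hx

lemma walk_ivt {V : Type} {G : SimpleGraph V} (col : V → ℤ)
    (hcol : ∀ a b, G.Adj a b → (col a - col b).natAbs ≤ 1)
    {u v : V} (p : G.Walk u v) (x : ℤ)
    (hx : col u ≤ x ∧ x ≤ col v ∨ col v ≤ x ∧ x ≤ col u) :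
    ∃ c ∈ p.support, col c = x := by
  induction p with
  | nil => refine ⟨_, Walk.start_mem_support _, ?_⟩; omega
  | @cons a w b h q ih =>
    by_cases hax : col a = x
    · exact ⟨a, by simp, hax⟩
    · have hcw := hcol a w h
      obtain ⟨c, hc, hcx⟩ := ih (by omega)
      exact ⟨c, by simp [hc], hcx⟩

/-- For a tree-partition of the graph on `[n] × [k]` whose bags induce connected
subgraphs, bags are adjacent in the quotient iff the intervals
`[ℓ(B) - 1/2, r(B) + 1/2]` intersect; hence the quotient is a caterpillar. -/
theorem stmt19 (n k : ℕ) (hn : 2 ≤ n) (hk : 1 ≤ k) {ι : Type}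
    (f : Fin n × Fin k → ι) (hf : IsTreePartition (gridGraph n k) f)
    (hbags : ∀ i, ((gridGraph n k).induce (f ⁻¹' {i})).Connected)
    (l r : ι → ℤ)
    (hl : ∀ i, IsLeast {x : ℤ | ∃ v, f v = i ∧ (v.1.val : ℤ) = x} (l i))
    (hr : ∀ i, IsGreatest {x : ℤ | ∃ v, f v = i ∧ (v.1.val : ℤ) = x} (r i)) :
    (∀ i j, i ≠ j →
      ((quotientGraph (gridGraph n k) f).Adj i j ↔
        (Set.Icc ((l i : ℝ) - 1 / 2) ((r i : ℝ) + 1 / 2) ∩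
          Set.Icc ((l j : ℝ) - 1 / 2) ((r j : ℝ) + 1 / 2)).Nonempty)) ∧
    IsCaterpillar (quotientGraph (gridGraph n k) f) := by
  classical
  obtain ⟨hsurj, hacy⟩ := hf
  set Q := quotientGraph (gridGraph n k) f with hQdef
  have hlr : ∀ i, l i ≤ r i := by
    intro i
    obtain ⟨⟨v0, hv0, hc0⟩, -⟩ := hl i
    exact (hr i).2 ⟨v0, hv0, hc0⟩
  have hocc : ∀ i x, l i ≤ x → x ≤ r i → ∃ v, f v = i ∧ (v.1.val : ℤ) = x := by
    intro i x h1 h2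
    obtain ⟨⟨v0, hv0, hc0⟩, -⟩ := hl i
    obtain ⟨⟨v1, hv1, hc1⟩, -⟩ := hr i
    have ha : v0 ∈ f ⁻¹' {i} := hv0
    have hb : v1 ∈ f ⁻¹' {i} := hv1
    obtain ⟨p⟩ := (hbags i).preconnected ⟨v0, ha⟩ ⟨v1, hb⟩
    obtain ⟨c, -, hcx⟩ := walk_ivt (G := (gridGraph n k).induce (f ⁻¹' {i}))
      (fun c => (c.1.1.val : ℤ)) (fun a b hab => hab.2) p x
      (by left; exact ⟨by simp only []; omega, by simp only []; omega⟩)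
    exact ⟨c.1, c.2, hcx⟩
  have adjI : ∀ {i j}, Q.Adj i j → l j ≤ r i + 1 ∧ l i ≤ r j + 1 := by
    rintro i j ⟨-, u, v, huv, rfl, rfl⟩
    obtain ⟨-, hd⟩ := huv
    have h1 := (hl (f u)).2 ⟨u, rfl, rfl⟩
    have h2 := (hr (f u)).2 ⟨u, rfl, rfl⟩
    have h3 := (hl (f v)).2 ⟨v, rfl, rfl⟩
    have h4 := (hr (f v)).2 ⟨v, rfl, rfl⟩
    omega
  have key : ∀ i j, i ≠ j → (Q.Adj i j ↔ l j ≤ r i + 1 ∧ l i ≤ r j + 1) := by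
    intro i j hij
    refine ⟨adjI, ?_⟩
    rintro ⟨h1, h2⟩
    by_cases hc : l j ≤ r i ∧ l i ≤ r j
    · obtain ⟨u, hu, hux⟩ := hocc i (max (l i) (l j)) (le_max_left _ _)
        (by have := hlr i; omega)
      obtain ⟨v, hv, hvx⟩ := hocc j (max (l i) (l j)) (le_max_right _ _)
        (by have := hlr j; omega)
      exact ⟨hij, u, v, ⟨fun heq => hij (hu.symm.trans (heq ▸ hv)), by omega⟩, hu, hv⟩
    · rw [not_and_or] at hc
      rcases hc with hc | hc
      · obtain ⟨u, hu, hux⟩ := hocc i (r i) (hlr i) le_rfl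
        obtain ⟨v, hv, hvx⟩ := hocc j (l j) le_rfl (hlr j)
        exact ⟨hij, u, v, ⟨fun heq => hij (hu.symm.trans (heq ▸ hv)), by omega⟩, hu, hv⟩
      · obtain ⟨u, hu, hux⟩ := hocc i (l i) le_rfl (hlr i)
        obtain ⟨v, hv, hvx⟩ := hocc j (r j) (hlr j) le_rfl
        exact ⟨hij, u, v, ⟨fun heq => hij (hu.symm.trans (heq ▸ hv)), by omega⟩, hu, hv⟩
  have hiff : ∀ i j, (Set.Icc ((l i : ℝ) - 1 / 2) ((r i : ℝ) + 1 / 2) ∩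
      Set.Icc ((l j : ℝ) - 1 / 2) ((r j : ℝ) + 1 / 2)).Nonempty ↔
      (l j ≤ r i + 1 ∧ l i ≤ r j + 1) := by
    intro i j
    constructor
    · rintro ⟨x, ⟨hx1, hx2⟩, hx3, hx4⟩
      constructor
      · have : (l j : ℝ) ≤ (r i : ℝ) + 1 := by linarith
        exact_mod_cast this
      · have : (l i : ℝ) ≤ (r j : ℝ) + 1 := by linarith
        exact_mod_cast this
    · rintro ⟨h1, h2⟩
      have c1 : (l j : ℝ) ≤ (r i : ℝ) + 1 := by exact_mod_cast h1
      have c2 : (l i : ℝ) ≤ (r j : ℝ) + 1 := by exact_mod_cast h2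
      have c3 : (l i : ℝ) ≤ (r i : ℝ) := by exact_mod_cast hlr i
      have c4 : (l j : ℝ) ≤ (r j : ℝ) := by exact_mod_cast hlr j
      refine ⟨max ((l i : ℝ) - 1 / 2) ((l j : ℝ) - 1 / 2),
        Set.mem_inter (Set.mem_Icc.mpr ⟨le_max_left _ _, ?_⟩)
          (Set.mem_Icc.mpr ⟨le_max_right _ _, ?_⟩)⟩ <;>
        (rw [max_le_iff]; constructor <;> linarith)
  have hV : Nonempty (Fin n × Fin k) := ⟨⟨⟨0, by omega⟩, ⟨0, by omega⟩⟩⟩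
  have horig : ∀ u : Fin n × Fin k,
      (gridGraph n k).Reachable u ⟨⟨0, by omega⟩, ⟨0, by omega⟩⟩ := by
    have main : ∀ x : ℕ, ∀ u : Fin n × Fin k, u.1.val ≤ x →
        (gridGraph n k).Reachable u ⟨⟨0, by omega⟩, ⟨0, by omega⟩⟩ := by
      intro x
      induction x with
      | zero =>
        intro u hu
        by_cases h : u = ⟨⟨0, by omega⟩, ⟨0, by omega⟩⟩
        · exact h ▸ Reachable.refl _
        · refine Adj.reachable ⟨h, ?_⟩
          show ((u.1.val : ℤ) - ((0 : ℕ) : ℤ)).natAbs ≤ 1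
          omega
      | succ x ih =>
        intro u hu
        by_cases h : u.1.val ≤ x
        · exact ih u h
        · have hx1 : u.1.val = x + 1 := by omega
          have hxn : x < n := by omega
          have hw : (gridGraph n k).Adj u ⟨⟨x, hxn⟩, u.2⟩ := by
            refine ⟨?_, ?_⟩
            · intro heq
              have := congrArg (fun p => p.1.val) heq
              simp only [] at this
              omega
            · show ((u.1.val : ℤ) - ((x : ℕ) : ℤ)).natAbs ≤ 1
              omega
          exact (hw.reachable).trans (ih _ (by simp))
    intro u; exact main u.1.val u le_rfl
  have push : ∀ {u v : Fin n × Fin k}, (gridGraph n k).Walk u v →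
      Q.Reachable (f u) (f v) := by
    intro u v p
    induction p with
    | nil => exact Reachable.refl _
    | @cons a w b h q ih =>
      by_cases hfa : f a = f w
      · rw [hfa]; exact ih
      · have hadj : Q.Adj (f a) (f w) := ⟨hfa, a, w, h, rfl, rfl⟩
        exact hadj.reachable.trans ih
  have hconn : Q.Connected := by
    rw [connected_iff]
    refine ⟨?_, ⟨f hV.some⟩⟩
    intro i j
    obtain ⟨u, rfl⟩ := hsurj i
    obtain ⟨v, rfl⟩ := hsurj j
    obtain ⟨p⟩ := (horig u).trans (horig v).symm
    exact push p
  have pokes : ∀ v a, Q.Adj v a → a ∈ internalVerts Q →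
      r v + 1 ≤ r a ∨ l a ≤ l v - 1 := by
    intro v a hva ha
    obtain ⟨w1, w2, hw12, hw1, hw2⟩ := ha
    have hstep : ∀ w, Q.Adj a w → w ≠ v → r v + 1 ≤ r a ∨ l a ≤ l v - 1 := by
      intro w haw hwv
      have hnadj : ¬ Q.Adj v w := fun hvw => no_triangle hacy hva haw hvw
      have hfar : ¬(l w ≤ r v + 1 ∧ l v ≤ r w + 1) :=
        fun hh => hnadj ((key v w (Ne.symm hwv)).mpr hh)
      have h1 := adjI haw
      rcases not_and_or.mp hfar with h | h
      · left; omega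
      · right; omega
    by_cases h1 : w1 = v
    · exact hstep w2 hw2 (fun h2 => hw12 (h1.trans h2.symm))
    · exact hstep w1 hw1 h1
  have sideR : ∀ v a b, Q.Adj v a → Q.Adj v b → r v + 1 ≤ r a → r v + 1 ≤ r b →
      a = b := by
    intro v a b hva hvb hra hrb
    by_contra hab
    have hnadj : ¬ Q.Adj a b := fun h => no_triangle hacy h hvb.symm hva.symm
    have hfar : ¬(l b ≤ r a + 1 ∧ l a ≤ r b + 1) :=
      fun hh => hnadj ((key a b hab).mpr hh)
    have h1 := adjI hva
    have h2 := adjI hvb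
    rcases not_and_or.mp hfar with h | h <;> omega
  have sideL : ∀ v a b, Q.Adj v a → Q.Adj v b → l a ≤ l v - 1 → l b ≤ l v - 1 →
      a = b := by
    intro v a b hva hvb hla hlb
    by_contra hab
    have hnadj : ¬ Q.Adj a b := fun h => no_triangle hacy h hvb.symm hva.symm
    have hfar : ¬(l b ≤ r a + 1 ∧ l a ≤ r b + 1) :=
      fun hh => hnadj ((key a b hab).mpr hh)
    have h1 := adjI hva
    have h2 := adjI hvb
    rcases not_and_or.mp hfar with h | h <;> omega
  constructor
  · intro i j hij
    rw [key i j hij]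
    exact (hiff i j).symm
  · refine ⟨hconn, hacy, ?_⟩
    by_cases hemp : internalVerts Q = ∅
    · exact Or.inl hemp
    · right
      obtain ⟨i0, hi0⟩ := Set.nonempty_iff_ne_empty.mpr hemp
      refine ⟨?_, induce_acyclic hacy _, ?_⟩
      · rw [connected_iff]
        refine ⟨?_, ⟨⟨i0, hi0⟩⟩⟩
        rintro ⟨u, hu⟩ ⟨v, hv⟩
        obtain ⟨p⟩ := hconn.preconnected u v
        exact lift_walk p.toPath.1 (path_internal p.toPath.1 p.toPath.2 hu hv) hu hv
      · rintro ⟨v, hv⟩ ⟨a, ha⟩ ⟨b, hb⟩ ⟨c, hc⟩ hva hvb hvc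
        have hva' : Q.Adj v a := hva
        have hvb' : Q.Adj v b := hvb
        have hvc' : Q.Adj v c := hvc
        rcases pokes v a hva' ha with h1 | h1 <;>
          rcases pokes v b hvb' hb with h2 | h2 <;>
          rcases pokes v c hvc' hc with h3 | h3
        · exact Or.inl (Subtype.ext (sideR v a b hva' hvb' h1 h2))
        · exact Or.inl (Subtype.ext (sideR v a b hva' hvb' h1 h2))
        · exact Or.inr (Or.inl (Subtype.ext (sideR v a c hva' hvc' h1 h3)))
        · exact Or.inr (Or.inr (Subtype.ext (sideL v b c hvb' hvc' h2 h3)))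
        · exact Or.inr (Or.inr (Subtype.ext (sideR v b c hvb' hvc' h2 h3)))
        · exact Or.inr (Or.inl (Subtype.ext (sideL v a c hva' hvc' h1 h3)))
        · exact Or.inl (Subtype.ext (sideL v a b hva' hvb' h1 h2))
        · exact Or.inl (Subtype.ext (sideL v a b hva' hvb' h1 h2))
end
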